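/- arXiv:2307.13749 — 11 statements merged into one kernel-verified Lean document; each statement's English description precedes it below -/
import Mathlib

section
/- For all natural numbers n and p, the number of anchored chains ∅ ⊊ N₀ ⊊ ⋯ ⊊ N_p ⊆ Fin(n+1) of Finsets of Fin(n+1) equals ∑_{k=p}^{n} C(n+1, k+1) · b⁺(k,p), where b⁺(k,p) is the number of anchored full chains ∅ ⊊ N₀ ⊊ ⋯ ⊊ N_p = Fin(k+1) of Finsets of Fin(k+1), and C(a,b) denotes the binomial coefficient Nat.choose a b. -/
/-!
Sort the anchored chains by their top element `T`. The anchored chains ending at `T` are the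
anchored full chains of the interval `Set.Iic T`, which is order isomorphic to
`Finset (Fin (k + 1))` when `#T = k + 1`; so each of the `C(n + 1, k + 1)` sets of size `k + 1`
contributes `b⁺(k, p)`. Cardinalities strictly increase along a chain starting from a nonempty
set, so no anchored chain of length `p` ends in a set with at most `p` elements.
-/

/-- `b⁺(k,p)`: the number of anchored full chains
`∅ ⊊ N₀ ⊊ ⋯ ⊊ N_p = Fin (k+1)` of Finsets of `Fin (k+1)`. -/
noncomputable def bplus (k p : ℕ) : ℕ :=
  Nat.card {c : Fin (p + 1) → Finset (Fin (k + 1)) //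
    StrictMono c ∧ c 0 ≠ ∅ ∧ c (Fin.last p) = Finset.univ}

open Finset

/-- With `T = ⊤` these are the anchored full chains: `bplus k p` is, definitionally, the
cardinality of `AnchoredChainsTo p (⊤ : Finset (Fin (k + 1)))`. -/
abbrev AnchoredChainsTo {P : Type*} [PartialOrder P] [OrderBot P] (p : ℕ) (T : P) : Type _ :=
  {c : Fin (p + 1) → P // StrictMono c ∧ c 0 ≠ ⊥ ∧ c (Fin.last p) = T}

def Equiv.finsetOrderIso {α β : Type*} (e : α ≃ β) : Finset α ≃o Finset β :=
  { e.finsetCongr with map_rel_iff' := map_subset_map }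

def Finset.subtypeOrderIsoIic {α : Type*} [DecidableEq α] (T : Finset α) :
    Finset T ≃o Set.Iic T where
  toFun s := ⟨s.map (.subtype _), fun _ hx => property_of_mem_map_subtype s hx⟩
  invFun S := S.1.subtype (· ∈ T)
  left_inv s := by ext; simp
  right_inv S := Subtype.ext (subtype_map_of_mem fun _ hx => S.2 hx)
  map_rel_iff' := map_subset_map

namespace AnchoredChainsTo

section OrderBot

variable {P Q : Type*} [PartialOrder P] [OrderBot P] [PartialOrder Q] [OrderBot Q] {p : ℕ}

def congrOrderIso (e : P ≃o Q) (T : P) : AnchoredChainsTo p T ≃ AnchoredChainsTo p (e T) where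
  toFun c := ⟨e ∘ c.1, e.strictMono.comp c.2.1, by simpa using c.2.2.1, congrArg e c.2.2.2⟩
  invFun c := ⟨e.symm ∘ c.1, e.symm.strictMono.comp c.2.1, by simpa using c.2.2.1,
    by simp [c.2.2.2]⟩
  left_inv c := by ext; simp
  right_inv c := by ext; simp

def equivIic (T : P) : AnchoredChainsTo p T ≃ AnchoredChainsTo p (⊤ : Set.Iic T) where
  toFun c := ⟨fun i => ⟨c.1 i, (c.2.1.monotone (Fin.le_last i)).trans_eq c.2.2.2⟩,
    fun _ _ h => c.2.1 h, fun h => c.2.2.1 (congrArg Subtype.val h), Subtype.ext c.2.2.2⟩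
  invFun c := ⟨fun i => c.1 i, fun _ _ h => c.2.1 h,
    fun h => c.2.2.1 (Subtype.ext h), congrArg Subtype.val c.2.2.2⟩

lemma card_anchored_eq_sum [Fintype P] :
    Nat.card {c : Fin (p + 1) → P // StrictMono c ∧ c 0 ≠ ⊥} =
      ∑ T : P, Nat.card (AnchoredChainsTo p T) := by
  rw [← Nat.card_congr (Equiv.sigmaFiberEquiv
    fun c : {c : Fin (p + 1) → P // StrictMono c ∧ c 0 ≠ ⊥} => c.1 (Fin.last p)),
    Nat.card_sigma]
  exact sum_congr rfl fun T _ => Nat.card_congr <|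
    (Equiv.subtypeSubtypeEquivSubtypeInter _ fun c : Fin (p + 1) → P => c (Fin.last p) = T).trans
      (Equiv.subtypeEquivRight fun _ => and_assoc)

end OrderBot

lemma card_top_congr {P Q : Type*} [PartialOrder P] [BoundedOrder P] [PartialOrder Q]
    [BoundedOrder Q] {p : ℕ} (e : P ≃o Q) :
    Nat.card (AnchoredChainsTo p (⊤ : P)) = Nat.card (AnchoredChainsTo p (⊤ : Q)) := by
  rw [Nat.card_congr (congrOrderIso e ⊤), e.map_top]

variable {α : Type*} {p : ℕ}

lemma add_one_le_card {T : Finset α} (c : AnchoredChainsTo p T) : p + 1 ≤ #T := by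
  have key (i : Fin (p + 1)) : (i : ℕ) + 1 ≤ #(c.1 i) := by
    induction i using Fin.induction with
    | zero => simpa [one_le_card, nonempty_iff_ne_empty] using c.2.2.1
    | succ i ih =>
      have := card_lt_card (c.2.1 (Fin.castSucc_lt_succ (i := i)))
      simp only [Fin.val_succ, Fin.val_castSucc] at ih ⊢
      omega
  simpa [c.2.2.2] using key (Fin.last p)

lemma card_empty : Nat.card (AnchoredChainsTo p (∅ : Finset α)) = 0 :=
  have : IsEmpty (AnchoredChainsTo p (∅ : Finset α)) :=
    ⟨fun c => by simpa using add_one_le_card c⟩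
  Nat.card_of_isEmpty

lemma card_eq_bplus [DecidableEq α] {T : Finset α} {k : ℕ} (hT : #T = k + 1) :
    Nat.card (AnchoredChainsTo p T) = bplus k p := by
  rw [Nat.card_congr (equivIic T), ← card_top_congr T.subtypeOrderIsoIic,
    card_top_congr (T.equivFinOfCardEq hT).finsetOrderIso]
  rfl

end AnchoredChainsTo

lemma bplus_eq_zero_of_lt {k p : ℕ} (h : k < p) : bplus k p = 0 :=
  have : IsEmpty (AnchoredChainsTo p (⊤ : Finset (Fin (k + 1)))) :=
    ⟨fun c => by
      have := AnchoredChainsTo.add_one_le_card c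
      simp only [top_eq_univ, card_univ, Fintype.card_fin] at this
      omega⟩
  Nat.card_of_isEmpty

theorem anchored_chains_decomposition (n p : ℕ) :
    Nat.card {c : Fin (p + 1) → Finset (Fin (n + 1)) // StrictMono c ∧ c 0 ≠ ∅} =
      ∑ k ∈ Finset.Icc p n, Nat.choose (n + 1) (k + 1) * bplus k p := by
  calc _ = ∑ T : Finset (Fin (n + 1)), Nat.card (AnchoredChainsTo p T) :=
        AnchoredChainsTo.card_anchored_eq_sum
    _ = ∑ k ∈ range (n + 1), (n + 1).choose (k + 1) * bplus k p := by
      rw [← powerset_univ, sum_powerset, card_univ, Fintype.card_fin, sum_range_succ',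
        powersetCard_zero, sum_singleton, AnchoredChainsTo.card_empty, add_zero]
      refine sum_congr rfl fun k _ => ?_
      rw [sum_congr rfl fun T hT => AnchoredChainsTo.card_eq_bplus (mem_powersetCard.1 hT).2,
        sum_const, card_powersetCard, card_univ, Fintype.card_fin, smul_eq_mul]
    _ = _ := by
      refine (sum_subset (fun k hk => ?_) fun k hk hk' => ?_).symm
      · simp only [mem_Icc, mem_range] at hk ⊢; omega
      · simp only [mem_Icc, mem_range] at hk hk'
        rw [bplus_eq_zero_of_lt (by omega), mul_zero]
end

section
/- For all natural numbers n and m, the number of pairs (A,B) of Finsets of Fin(n+1) satisfying A ≼ B and A.card + B.card = m+1 equals (m+2)·C(n+1, m+1) + m·C(n+1, m), where C denotes the binomial coefficient. (This computes the number of m-simplices of the standard cylinder Cil Γ₊[n].) -/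
open Finset

section Aux

variable {α : Type*} [LinearOrder α] [DecidableEq α]

lemma cyl_lower_unique {S A A' : Finset α} (hA : A ⊆ S) (hA' : A' ⊆ S)
    (dA : ∀ x ∈ S, ∀ y ∈ A, x ≤ y → x ∈ A)
    (dA' : ∀ x ∈ S, ∀ y ∈ A', x ≤ y → x ∈ A')
    (hc : A.card = A'.card) : A = A' := by
  have key : A ⊆ A' ∨ A' ⊆ A := by
    by_contra hcon
    push_neg at hcon
    obtain ⟨h1, h2⟩ := hcon
    obtain ⟨y, hyA, hyA'⟩ := Finset.not_subset.mp h1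
    obtain ⟨z, hzA', hzA⟩ := Finset.not_subset.mp h2
    rcases le_total y z with h | h
    · exact hyA' (dA' y (hA hyA) z hzA' h)
    · exact hzA (dA z (hA' hzA') y hyA h)
  rcases key with h | h
  · exact Finset.eq_of_subset_of_card_le h (le_of_eq hc.symm)
  · exact (Finset.eq_of_subset_of_card_le h (le_of_eq hc)).symm

lemma cyl_upper_unique {S B B' : Finset α} (hB : B ⊆ S) (hB' : B' ⊆ S)
    (dB : ∀ x ∈ S, ∀ y ∈ B, y ≤ x → x ∈ B)
    (dB' : ∀ x ∈ S, ∀ y ∈ B', y ≤ x → x ∈ B')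
    (hc : B.card = B'.card) : B = B' := by
  have key : B ⊆ B' ∨ B' ⊆ B := by
    by_contra hcon
    push_neg at hcon
    obtain ⟨h1, h2⟩ := hcon
    obtain ⟨y, hyB, hyB'⟩ := Finset.not_subset.mp h1
    obtain ⟨z, hzB', hzB⟩ := Finset.not_subset.mp h2
    rcases le_total y z with h | h
    · exact hzB (dB z (hB' hzB') y hyB h)
    · exact hyB' (dB' y (hB hyB) z hzB' h)
  rcases key with h | h
  · exact Finset.eq_of_subset_of_card_le h (le_of_eq hc.symm)
  · exact (Finset.eq_of_subset_of_card_le h (le_of_eq hc)).symm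

/-- A valid pair is determined by its union and the cardinalities of components. -/
lemma cyl_pair_eq {A B A' B' : Finset α}
    (h : ∀ a ∈ A, ∀ b ∈ B, a ≤ b) (h' : ∀ a ∈ A', ∀ b ∈ B', a ≤ b)
    (hu : A ∪ B = A' ∪ B') (hcA : A.card = A'.card) (hcB : B.card = B'.card) :
    A = A' ∧ B = B' := by
  have dA : ∀ x ∈ A ∪ B, ∀ y ∈ A, x ≤ y → x ∈ A := by
    intro x hx y hy hxy
    rcases Finset.mem_union.mp hx with h1 | h1
    · exact h1
    · have := h y hy x h1
      have : x = y := le_antisymm hxy this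
      exact this ▸ hy
  have dA' : ∀ x ∈ A' ∪ B', ∀ y ∈ A', x ≤ y → x ∈ A' := by
    intro x hx y hy hxy
    rcases Finset.mem_union.mp hx with h1 | h1
    · exact h1
    · have := h' y hy x h1
      have : x = y := le_antisymm hxy this
      exact this ▸ hy
  have dB : ∀ x ∈ A ∪ B, ∀ y ∈ B, y ≤ x → x ∈ B := by
    intro x hx y hy hxy
    rcases Finset.mem_union.mp hx with h1 | h1
    · have := h x h1 y hy
      have : x = y := le_antisymm this hxy
      exact this ▸ hy
    · exact h1
  have dB' : ∀ x ∈ A' ∪ B', ∀ y ∈ B', y ≤ x → x ∈ B' := by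
    intro x hx y hy hxy
    rcases Finset.mem_union.mp hx with h1 | h1
    · have := h' x h1 y hy
      have : x = y := le_antisymm this hxy
      exact this ▸ hy
    · exact h1
  constructor
  · exact cyl_lower_unique Finset.subset_union_left (hu ▸ Finset.subset_union_left)
      dA (hu ▸ dA') hcA
  · exact cyl_upper_unique Finset.subset_union_right (hu ▸ Finset.subset_union_right)
      dB (hu ▸ dB') hcB

/-- Facts about the pair (take k, drop j) of a sorted nodup list, j ≤ k ≤ j+1. -/
lemma cyl_take_drop {l : List α} (hs : l.Pairwise (· ≤ ·)) (hn : l.Nodup)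
    {j k : ℕ} (hjk : j ≤ k) (hk : k ≤ l.length) (hkj : k ≤ j + 1) :
    (l.take k).toFinset ∪ (l.drop j).toFinset = l.toFinset ∧
    (l.take k).toFinset.card = k ∧
    (l.drop j).toFinset.card = l.length - j ∧
    (∀ a ∈ (l.take k).toFinset, ∀ b ∈ (l.drop j).toFinset, a ≤ b) ∧
    ((l.take k).toFinset ∩ (l.drop j).toFinset).card = k - j := by
  refine ⟨?_, ?_, ?_, ?_, ?_⟩
  · apply subset_antisymm
    · intro x hx
      rcases Finset.mem_union.mp hx with hx | hx
      · exact List.mem_toFinset.mpr (List.take_subset _ _ (List.mem_toFinset.mp hx))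
      · exact List.mem_toFinset.mpr (List.drop_subset _ _ (List.mem_toFinset.mp hx))
    · intro x hx
      have hx' := List.mem_toFinset.mp hx
      rw [← List.take_append_drop j l, List.mem_append] at hx'
      rcases hx' with hx' | hx'
      · have hsub : l.take j = (l.take k).take j := by
          rw [List.take_take, Nat.min_eq_left hjk]
        exact Finset.mem_union_left _ (List.mem_toFinset.mpr
          (List.take_subset _ _ (hsub ▸ hx')))
      · exact Finset.mem_union_right _ (List.mem_toFinset.mpr hx')
  · rw [List.toFinset_card_of_nodup ((l.take_sublist k).nodup hn), List.length_take]
    omega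
  · rw [List.toFinset_card_of_nodup ((l.drop_sublist j).nodup hn), List.length_drop]
  · intro a ha b hb
    have ha' := List.mem_toFinset.mp ha
    have hb' := List.mem_toFinset.mp hb
    rw [List.mem_take_iff_getElem] at ha'
    rw [List.mem_drop_iff_getElem] at hb'
    obtain ⟨i, hi, rfl⟩ := ha'
    obtain ⟨i', hi', rfl⟩ := hb'
    have hij : i ≤ j + i' := by omega
    exact hs.rel_get_of_le (a := ⟨i, by omega⟩) (b := ⟨j + i', by omega⟩) hij
  · rcases Nat.eq_or_lt_of_le hjk with rfl | hlt
    · have hd : List.Disjoint (l.take j) (l.drop j) := List.disjoint_take_drop hn le_rfl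
      have : (l.take j).toFinset ∩ (l.drop j).toFinset = ∅ := by
        ext x
        simp only [Finset.mem_inter, List.mem_toFinset, Finset.notMem_empty, iff_false]
        intro ⟨h1, h2⟩
        exact hd h1 h2
      simp [this]
    · have hk' : k = j + 1 := by omega
      subst hk'
      have hjl : j < l.length := by omega
      have heq : (l.take (j + 1)).toFinset ∩ (l.drop j).toFinset = {l[j]} := by
        ext x
        simp only [Finset.mem_inter, List.mem_toFinset, Finset.mem_singleton]
        constructor
        · rintro ⟨h1, h2⟩
          rw [List.take_succ] at h1
          rw [List.mem_append] at h1
          rcases h1 with h1 | h1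
          · exact absurd h2 (List.disjoint_take_drop hn le_rfl h1)
          · rw [List.getElem?_eq_getElem hjl] at h1
            simpa using h1
        · rintro rfl
          constructor
          · rw [List.mem_take_iff_getElem]
            exact ⟨j, by omega, rfl⟩
          · rw [List.mem_drop_iff_getElem]
            exact ⟨0, by omega, by simp⟩
      rw [heq]
      simp

end Aux

theorem cyl_simplices_count (n m : ℕ) :
    Nat.card {AB : Finset (Fin (n + 1)) × Finset (Fin (n + 1)) //
        ((AB.1 ∩ AB.2).card ≤ 1 ∧ ∀ a ∈ AB.1, ∀ b ∈ AB.2, a ≤ b) ∧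
          AB.1.card + AB.2.card = m + 1} =
      (m + 2) * Nat.choose (n + 1) (m + 1) + m * Nat.choose (n + 1) m := by
  classical
  set P : Finset (Fin (n + 1)) × Finset (Fin (n + 1)) → Prop :=
    fun AB => ((AB.1 ∩ AB.2).card ≤ 1 ∧ ∀ a ∈ AB.1, ∀ b ∈ AB.2, a ≤ b) ∧
      AB.1.card + AB.2.card = m + 1 with hP
  rw [Nat.card_eq_fintype_card, Fintype.card_subtype]
  set S := Finset.univ.filter P with hS
  set D := S.filter (fun AB => AB.1 ∩ AB.2 = ∅) with hD
  set E := S.filter (fun AB => ¬ AB.1 ∩ AB.2 = ∅) with hE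
  have hsplit : D.card + E.card = S.card := Finset.card_filter_add_card_filter_not _
  have hDcard : D.card = (m + 2) * Nat.choose (n + 1) (m + 1) := by
    have := Finset.card_bij
      (s := D)
      (t := (Finset.powersetCard (m + 1) (Finset.univ : Finset (Fin (n + 1)))) ×ˢ
        Finset.range (m + 2))
      (fun AB _ => (AB.1 ∪ AB.2, AB.1.card))
      ?_ ?_ ?_
    · rw [this, Finset.card_product, Finset.card_powersetCard, Finset.card_range,
        Finset.card_univ, Fintype.card_fin]
      ring
    · -- maps to
      rintro ⟨A, B⟩ hAB
      rw [hD, Finset.mem_filter, hS, Finset.mem_filter] at hAB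
      obtain ⟨⟨-, ⟨hle, hord⟩, hcard⟩, hint⟩ := hAB
      simp only at hint hcard hle hord ⊢
      rw [Finset.mem_product, Finset.mem_powersetCard, Finset.mem_range]
      have hdisj : Disjoint A B := Finset.disjoint_iff_inter_eq_empty.mpr hint
      refine ⟨⟨Finset.subset_univ _, ?_⟩, ?_⟩
      · rw [Finset.card_union_of_disjoint hdisj]; exact hcard
      · omega
    · -- injective
      rintro ⟨A, B⟩ hAB ⟨A', B'⟩ hAB' heq
      rw [hD, Finset.mem_filter, hS, Finset.mem_filter] at hAB hAB'
      obtain ⟨⟨-, ⟨hle, hord⟩, hcard⟩, hint⟩ := hAB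
      obtain ⟨⟨-, ⟨hle', hord'⟩, hcard'⟩, hint'⟩ := hAB'
      simp only [Prod.mk.injEq] at heq
      simp only at hcard hcard' hord hord'
      obtain ⟨hu, hk⟩ := heq
      have hB : B.card = B'.card := by
        have h1 : Disjoint A B := Finset.disjoint_iff_inter_eq_empty.mpr hint
        have h2 : Disjoint A' B' := Finset.disjoint_iff_inter_eq_empty.mpr hint'
        omega
      have := cyl_pair_eq hord hord' hu hk hB
      simp [Prod.ext_iff, this.1, this.2]
    · -- surjective
      rintro ⟨S0, k⟩ hmem
      rw [Finset.mem_product, Finset.mem_powersetCard, Finset.mem_range] at hmem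
      obtain ⟨⟨-, hS0⟩, hkm⟩ := hmem
      set l := S0.sort (· ≤ ·) with hl
      have hlen : l.length = m + 1 := by rw [hl, Finset.length_sort]; exact hS0
      have hfacts := cyl_take_drop (l := l) (S0.pairwise_sort _) (S0.sort_nodup _)
        (j := k) (k := k) le_rfl (by omega) (by omega)
      obtain ⟨hun, hcA, hcB, hord, hintc⟩ := hfacts
      rw [Finset.sort_toFinset] at hun
      refine ⟨((l.take k).toFinset, (l.drop k).toFinset), ?_, ?_⟩
      · rw [hD, Finset.mem_filter, hS, Finset.mem_filter]
        have hint0 : ((l.take k).toFinset ∩ (l.drop k).toFinset) = ∅ := by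
          rw [← Finset.card_eq_zero]; omega
        refine ⟨⟨Finset.mem_univ _, ⟨?_, hord⟩, ?_⟩, hint0⟩
        · simp only; omega
        · simp only; omega
      · simp only [Prod.mk.injEq]
        exact ⟨hun, hcA⟩
  have hEcard : E.card = m * Nat.choose (n + 1) m := by
    have := Finset.card_bij
      (s := E)
      (t := (Finset.powersetCard m (Finset.univ : Finset (Fin (n + 1)))) ×ˢ
        Finset.Icc 1 m)
      (fun AB _ => (AB.1 ∪ AB.2, AB.1.card))
      ?_ ?_ ?_
    · rw [this, Finset.card_product, Finset.card_powersetCard, Nat.card_Icc,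
        Finset.card_univ, Fintype.card_fin, Nat.add_sub_cancel, Nat.mul_comm]
    · -- maps to
      rintro ⟨A, B⟩ hAB
      rw [hE, Finset.mem_filter, hS, Finset.mem_filter] at hAB
      obtain ⟨⟨-, ⟨hle, hord⟩, hcard⟩, hint⟩ := hAB
      simp only at hint hcard hle hord ⊢
      rw [Finset.mem_product, Finset.mem_powersetCard, Finset.mem_Icc]
      have hint1 : (A ∩ B).card = 1 := by
        have : (A ∩ B).card ≠ 0 := fun h => hint (Finset.card_eq_zero.mp h)
        omega
      have huAB := Finset.card_union_add_card_inter A B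
      have hA1 : 1 ≤ A.card := by
        have : (A ∩ B) ⊆ A := Finset.inter_subset_left
        have := Finset.card_le_card this
        omega
      have hB1 : 1 ≤ B.card := by
        have : (A ∩ B) ⊆ B := Finset.inter_subset_right
        have := Finset.card_le_card this
        omega
      refine ⟨⟨Finset.subset_univ _, ?_⟩, ?_, ?_⟩ <;> simp only <;> omega
    · -- injective
      rintro ⟨A, B⟩ hAB ⟨A', B'⟩ hAB' heq
      rw [hE, Finset.mem_filter, hS, Finset.mem_filter] at hAB hAB'
      obtain ⟨⟨-, ⟨hle, hord⟩, hcard⟩, hint⟩ := hAB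
      obtain ⟨⟨-, ⟨hle', hord'⟩, hcard'⟩, hint'⟩ := hAB'
      simp only [Prod.mk.injEq] at heq
      simp only at hcard hcard' hord hord'
      obtain ⟨hu, hk⟩ := heq
      have hB : B.card = B'.card := by omega
      have := cyl_pair_eq hord hord' hu hk hB
      simp [Prod.ext_iff, this.1, this.2]
    · -- surjective
      rintro ⟨S0, k⟩ hmem
      rw [Finset.mem_product, Finset.mem_powersetCard, Finset.mem_Icc] at hmem
      obtain ⟨⟨-, hS0⟩, hk1, hkm⟩ := hmem
      set l := S0.sort (· ≤ ·) with hl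
      have hlen : l.length = m := by rw [hl, Finset.length_sort]; exact hS0
      have hfacts := cyl_take_drop (l := l) (S0.pairwise_sort _) (S0.sort_nodup _)
        (j := k - 1) (k := k) (by omega) (by omega) (by omega)
      obtain ⟨hun, hcA, hcB, hord, hintc⟩ := hfacts
      rw [Finset.sort_toFinset] at hun
      refine ⟨((l.take k).toFinset, (l.drop (k - 1)).toFinset), ?_, ?_⟩
      · rw [hE, Finset.mem_filter, hS, Finset.mem_filter]
        have hint1 : ((l.take k).toFinset ∩ (l.drop (k - 1)).toFinset).card = 1 := by
          omega
        refine ⟨⟨Finset.mem_univ _, ⟨?_, hord⟩, ?_⟩, ?_⟩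
        · simp only; omega
        · simp only; omega
        · simp only
          intro h
          rw [h] at hint1
          simp at hint1
      · simp only [Prod.mk.injEq]
        exact ⟨hun, hcA⟩
  rw [← hsplit, hDcard, hEcard]
end

section
/- For all natural numbers n and m, the number of pairs (A,B) of Finsets of Fin(n+1) satisfying A ≼ B, A ∪ B = Finset.univ, and A.card + B.card = m+1 equals n+2 if m = n, equals n+1 if m = n+1, and equals 0 otherwise. (This is the cardinal sequence of breve Cil Γ₊[n] = Cil Γ₊[n] \ Cil ∂Γ₊[n].) -/
open Finset

private def plo (n k : ℕ) : Finset (Fin (n+1)) :=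
  Finset.filter (fun x => (x:ℕ) < k) Finset.univ

private def phi (n j : ℕ) : Finset (Fin (n+1)) :=
  Finset.filter (fun x => j ≤ (x:ℕ)) Finset.univ

private lemma mem_plo {n k : ℕ} {x : Fin (n+1)} : x ∈ plo n k ↔ (x:ℕ) < k := by
  simp [plo]

private lemma mem_phi {n j : ℕ} {x : Fin (n+1)} : x ∈ phi n j ↔ j ≤ (x:ℕ) := by
  simp [phi]

private lemma card_flt {N k : ℕ} (hk : k ≤ N) :
    (Finset.filter (fun x : Fin N => (x:ℕ) < k) Finset.univ).card = k := by
  have h : Finset.filter (fun x : Fin N => (x:ℕ) < k) Finset.univ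
      = (Finset.range k).attachFin (fun m hm => lt_of_lt_of_le (Finset.mem_range.mp hm) hk) := by
    ext x; simp [Finset.mem_attachFin]
  rw [h, Finset.card_attachFin, Finset.card_range]

private lemma card_plo {n k : ℕ} (hk : k ≤ n+1) : (plo n k).card = k := card_flt hk

private lemma plo_compl {n j : ℕ} : (plo n j)ᶜ = phi n j := by
  ext x; simp [plo, phi]

private lemma card_phi {n j : ℕ} (hj : j ≤ n+1) : (phi n j).card = n+1-j := by
  rw [← plo_compl, Finset.card_compl, Fintype.card_fin, card_plo hj]

private lemma downset_eq {N : ℕ} (A : Finset (Fin N))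
    (h : ∀ x ∈ A, ∀ y, y ≤ x → y ∈ A) :
    A = Finset.filter (fun x : Fin N => (x:ℕ) < A.card) Finset.univ := by
  ext x
  simp only [Finset.mem_filter, Finset.mem_univ, true_and]
  constructor
  · intro hx
    have hsub : Finset.filter (fun y : Fin N => (y:ℕ) < (x:ℕ)+1) Finset.univ ⊆ A := by
      intro y hy
      simp only [Finset.mem_filter, Finset.mem_univ, true_and] at hy
      exact h x hx y (by rw [Fin.le_def]; omega)
    have hc := Finset.card_le_card hsub
    rw [card_flt (by omega : (x:ℕ)+1 ≤ N)] at hc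
    omega
  · intro hx
    by_contra hxA
    have hsub : A ⊆ Finset.filter (fun y : Fin N => (y:ℕ) < (x:ℕ)) Finset.univ := by
      intro y hy
      simp only [Finset.mem_filter, Finset.mem_univ, true_and]
      by_contra hlt
      push_neg at hlt
      exact hxA (h y hy x (by rw [Fin.le_def]; omega))
    have hc := Finset.card_le_card hsub
    rw [card_flt (le_of_lt x.isLt)] at hc
    omega

private lemma upset_eq {n : ℕ} (B : Finset (Fin (n+1)))
    (h : ∀ x ∈ B, ∀ y, x ≤ y → y ∈ B) :
    B = phi n (n+1 - B.card) := by
  have hc : ∀ x ∈ Bᶜ, ∀ y, y ≤ x → y ∈ Bᶜ := by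
    intro x hx y hyx
    simp only [Finset.mem_compl] at *
    intro hyB
    exact hx (h y hyB x hyx)
  have hd := downset_eq Bᶜ hc
  rw [Finset.card_compl, Fintype.card_fin] at hd
  have h2 : Bᶜ = plo n (n+1 - B.card) := hd
  conv_lhs => rw [← compl_compl B, h2]
  exact plo_compl

private lemma sat_pair (n k j : ℕ) (hk : k ≤ n+1) (hj : j ≤ k) (hjk : k ≤ j + 1) :
    ((plo n k ∩ phi n j).card ≤ 1 ∧ ∀ a ∈ plo n k, ∀ b ∈ phi n j, a ≤ b) ∧
      plo n k ∪ phi n j = Finset.univ ∧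
      (plo n k).card + (phi n j).card = (n + (k - j)) + 1 := by
  refine ⟨⟨?_, ?_⟩, ?_, ?_⟩
  · apply Finset.card_le_one.mpr
    intro a ha b hb
    rw [Finset.mem_inter, mem_plo, mem_phi] at ha hb
    apply Fin.ext; omega
  · intro a ha b hb
    rw [mem_plo] at ha; rw [mem_phi] at hb
    rw [Fin.le_def]; omega
  · apply Finset.eq_univ_iff_forall.mpr
    intro x
    rw [Finset.mem_union, mem_plo, mem_phi]
    omega
  · rw [card_plo hk, card_phi (by omega)]
    omega

private lemma char_pair (n m : ℕ) (A B : Finset (Fin (n+1)))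
    (h : ((A ∩ B).card ≤ 1 ∧ ∀ a ∈ A, ∀ b ∈ B, a ≤ b) ∧
      A ∪ B = Finset.univ ∧ A.card + B.card = m+1) :
    (m = n ∧ ∃ k ≤ n+1, A = plo n k ∧ B = phi n k) ∨
    (m = n+1 ∧ ∃ k, 1 ≤ k ∧ k ≤ n+1 ∧ A = plo n k ∧ B = phi n (k-1)) := by
  obtain ⟨⟨hint, hle⟩, huniv, hcard⟩ := h
  have hdown : ∀ x ∈ A, ∀ y, y ≤ x → y ∈ A := by
    intro x hx y hyx
    have hy : y ∈ A ∪ B := by rw [huniv]; exact Finset.mem_univ y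
    rcases Finset.mem_union.mp hy with h' | h'
    · exact h'
    · have hxy := hle x hx y h'
      have : y = x := le_antisymm hyx hxy
      rwa [this]
  have hup : ∀ x ∈ B, ∀ y, x ≤ y → y ∈ B := by
    intro x hx y hxy
    have hy : y ∈ A ∪ B := by rw [huniv]; exact Finset.mem_univ y
    rcases Finset.mem_union.mp hy with h' | h'
    · have hyx := hle y h' x hx
      have : y = x := le_antisymm hyx hxy
      rwa [this]
    · exact h'
  have hA : A = plo n A.card := downset_eq A hdown
  have hB : B = phi n (n+1 - B.card) := upset_eq B hup
  have hAc : A.card ≤ n+1 := by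
    have := Finset.card_le_univ A; simpa using this
  have hBc : B.card ≤ n+1 := by
    have := Finset.card_le_univ B; simpa using this
  have hie : (A ∪ B).card + (A ∩ B).card = A.card + B.card :=
    Finset.card_union_add_card_inter A B
  rw [huniv] at hie
  have huc : (Finset.univ : Finset (Fin (n+1))).card = n+1 := by simp
  rw [huc, hcard] at hie
  -- (A ∩ B).card = m - n, and ≤ 1
  rcases (by omega : m = n ∨ m = n+1) with hm | hm
  · left
    refine ⟨hm, A.card, hAc, hA, ?_⟩
    have : n+1 - B.card = A.card := by omega
    rwa [this] at hB
  · right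
    refine ⟨hm, A.card, by omega, hAc, hA, ?_⟩
    have : n+1 - B.card = A.card - 1 := by omega
    rwa [this] at hB

theorem breve_cyl_simplices_count (n m : ℕ) :
    Nat.card {AB : Finset (Fin (n + 1)) × Finset (Fin (n + 1)) //
        ((AB.1 ∩ AB.2).card ≤ 1 ∧ ∀ a ∈ AB.1, ∀ b ∈ AB.2, a ≤ b) ∧
          AB.1 ∪ AB.2 = Finset.univ ∧ AB.1.card + AB.2.card = m + 1} =
      if m = n then n + 2 else if m = n + 1 then n + 1 else 0 := by
  classical
  rw [Nat.card_eq_fintype_card, Fintype.card_subtype]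
  by_cases hm : m = n
  · subst hm
    rw [if_pos rfl]
    have himg : (Finset.univ.filter fun AB : Finset (Fin (m+1)) × Finset (Fin (m+1)) =>
        ((AB.1 ∩ AB.2).card ≤ 1 ∧ ∀ a ∈ AB.1, ∀ b ∈ AB.2, a ≤ b) ∧
          AB.1 ∪ AB.2 = Finset.univ ∧ AB.1.card + AB.2.card = m + 1)
        = (Finset.range (m+2)).image (fun k => (plo m k, phi m k)) := by
      ext AB
      simp only [Finset.mem_filter, Finset.mem_univ, true_and, Finset.mem_image,
        Finset.mem_range]
      constructor
      · intro h
        rcases char_pair m m AB.1 AB.2 h with ⟨_, k, hk, hA, hB⟩ | ⟨hmn, _⟩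
        · exact ⟨k, by omega, by rw [Prod.ext_iff]; exact ⟨hA.symm, hB.symm⟩⟩
        · omega
      · rintro ⟨k, hk, rfl⟩
        have := sat_pair m k k (by omega) le_rfl (by omega)
        simpa using this
    rw [himg, Finset.card_image_of_injOn, Finset.card_range]
    intro k hk k' hk' he
    simp only [Finset.mem_coe, Finset.mem_range] at hk hk'
    simp only [Prod.mk.injEq] at he
    have h1 : (plo m k).card = (plo m k').card := by rw [he.1]
    rwa [card_plo (by omega), card_plo (by omega)] at h1
  · rw [if_neg hm]
    by_cases hm' : m = n + 1
    · subst hm'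
      rw [if_pos rfl]
      have himg : (Finset.univ.filter fun AB : Finset (Fin (n+1)) × Finset (Fin (n+1)) =>
          ((AB.1 ∩ AB.2).card ≤ 1 ∧ ∀ a ∈ AB.1, ∀ b ∈ AB.2, a ≤ b) ∧
            AB.1 ∪ AB.2 = Finset.univ ∧ AB.1.card + AB.2.card = (n+1) + 1)
          = (Finset.Icc 1 (n+1)).image (fun k => (plo n k, phi n (k-1))) := by
        ext AB
        simp only [Finset.mem_filter, Finset.mem_univ, true_and, Finset.mem_image,
          Finset.mem_Icc]
        constructor
        · intro h
          rcases char_pair n (n+1) AB.1 AB.2 h with ⟨hmn, _⟩ | ⟨_, k, hk1, hk2, hA, hB⟩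
          · omega
          · exact ⟨k, ⟨hk1, hk2⟩, by rw [Prod.ext_iff]; exact ⟨hA.symm, hB.symm⟩⟩
        · rintro ⟨k, ⟨hk1, hk2⟩, rfl⟩
          have := sat_pair n k (k-1) (by omega) (by omega) (by omega)
          have heq : n + (k - (k-1)) + 1 = (n+1)+1 := by omega
          rw [heq] at this
          simpa using this
      rw [himg, Finset.card_image_of_injOn, Nat.card_Icc]
      · omega
      · intro k hk k' hk' he
        simp only [Finset.mem_coe, Finset.mem_Icc] at hk hk'
        simp only [Prod.mk.injEq] at he
        have h1 : (plo n k).card = (plo n k').card := by rw [he.1]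
        rwa [card_plo (by omega), card_plo (by omega)] at h1
    · rw [if_neg hm']
      rw [Finset.card_eq_zero, Finset.filter_eq_empty_iff]
      intro AB _
      intro h
      rcases char_pair n m AB.1 AB.2 h with ⟨hmn, _⟩ | ⟨hmn, _⟩
      · exact hm hmn
      · exact hm' hmn
end

section
/- For all natural numbers n and m, the number of pairs (A,B) of Finsets of Fin(n+1) with A ≼ B and A.card + B.card = m+1 equals ∑_{j=0}^{n} C(n+1, j+1) · b(j,m), where b(j,m) is the number of pairs (A′,B′) of Finsets of Fin(j+1) with A′ ≼ B′, A′ ∪ B′ = Finset.univ, and A′.card + B′.card = m+1, and C denotes the binomial coefficient. (Decomposition |Cil Γ₊[n]| = ∑_j C(n+1,j+1)|breve Cil Γ₊[j]|.) -/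
/-!
Sort the pairs `(A, B)` by their union `S = A ∪ B`. The order embedding `Fin #S ↪o α` with range
`S` transports the cylinder pairs with union `S` bijectively onto the cylinder pairs covering
`Fin #S`, so their number depends on `#S` only; there are `C(n+1, k)` sets `S` of size `k`, and
`S = ∅` contributes nothing because `#A + #B = m + 1 > 0`.
-/

/-- `b(j,m)`: the number of pairs `(A,B)` of Finsets of `Fin (j+1)` satisfying the
standard cylinder condition, covering `Fin (j+1)`, with `A.card + B.card = m+1`. -/
noncomputable def breveCil (j m : ℕ) : ℕ :=
  Nat.card {AB : Finset (Fin (j + 1)) × Finset (Fin (j + 1)) //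
    ((AB.1 ∩ AB.2).card ≤ 1 ∧ ∀ a ∈ AB.1, ∀ b ∈ AB.2, a ≤ b) ∧
      AB.1 ∪ AB.2 = Finset.univ ∧ AB.1.card + AB.2.card = m + 1}

open Finset

variable {α β : Type*} [LinearOrder α] [LinearOrder β]

/-- The standard cylinder condition `A ≼ B`. -/
def IsCylinderPair (A B : Finset α) : Prop :=
  #(A ∩ B) ≤ 1 ∧ ∀ a ∈ A, ∀ b ∈ B, a ≤ b

theorem isCylinderPair_map_iff (f : α ↪o β) {A B : Finset α} :
    IsCylinderPair (A.map f.toEmbedding) (B.map f.toEmbedding) ↔ IsCylinderPair A B := by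
  simp [IsCylinderPair, ← map_inter, card_map]

def cylinderPairsWithUnion (S : Finset α) (m : ℕ) : Set (Finset α × Finset α) :=
  {AB | IsCylinderPair AB.1 AB.2 ∧ AB.1 ∪ AB.2 = S ∧ #AB.1 + #AB.2 = m + 1}

theorem cylinderPairsWithUnion_map (f : α ↪o β) (S : Finset α) (m : ℕ) :
    cylinderPairsWithUnion (S.map f.toEmbedding) m =
      Prod.map (map f.toEmbedding) (map f.toEmbedding) '' cylinderPairsWithUnion S m := by
  ext ⟨A', B'⟩
  constructor
  · rintro ⟨hcyl, hunion, hcard⟩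
    obtain ⟨A, -, rfl⟩ := subset_map_iff.mp (hunion ▸ subset_union_left)
    obtain ⟨B, -, rfl⟩ := subset_map_iff.mp (hunion ▸ subset_union_right)
    rw [← map_union, map_inj] at hunion
    rw [card_map, card_map] at hcard
    exact ⟨(A, B), ⟨(isCylinderPair_map_iff f).mp hcyl, hunion, hcard⟩, rfl⟩
  · rintro ⟨⟨A, B⟩, ⟨hcyl, rfl, hcard⟩, h⟩
    simp only [Prod.map, Prod.mk.injEq] at h
    obtain ⟨rfl, rfl⟩ := h
    exact ⟨(isCylinderPair_map_iff f).mpr hcyl, (map_union ..).symm, by simpa using hcard⟩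

theorem breveCil_eq_card_cylinderPairsWithUnion (j m : ℕ) :
    breveCil j m = Nat.card (cylinderPairsWithUnion (univ : Finset (Fin (j + 1))) m) :=
  rfl

theorem card_cylinderPairsWithUnion_map (f : α ↪o β) (S : Finset α) (m : ℕ) :
    Nat.card (cylinderPairsWithUnion (S.map f.toEmbedding) m) =
      Nat.card (cylinderPairsWithUnion S m) := by
  rw [cylinderPairsWithUnion_map, Nat.card_image_of_injective]
  exact (map_injective _).prodMap (map_injective _)

theorem card_cylinderPairsWithUnion_eq_univ (S : Finset α) (m : ℕ) :
    Nat.card (cylinderPairsWithUnion S m) =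
      Nat.card (cylinderPairsWithUnion (univ : Finset (Fin #S)) m) := by
  conv_lhs => rw [← map_orderEmbOfFin_univ S rfl]
  exact card_cylinderPairsWithUnion_map ..

theorem card_cylinderPairsWithUnion_empty (m : ℕ) :
    Nat.card (cylinderPairsWithUnion (∅ : Finset α) m) = 0 := by
  refine Nat.card_eq_zero.mpr (.inl ⟨?_⟩)
  rintro ⟨⟨A, B⟩, -, hunion, hcard⟩
  obtain ⟨rfl, rfl⟩ := union_eq_empty.mp hunion
  simp at hcard

def cylinderPairsEquivSigmaUnion (m : ℕ) :
    {AB : Finset α × Finset α // IsCylinderPair AB.1 AB.2 ∧ #AB.1 + #AB.2 = m + 1} ≃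
      Σ S : Finset α, cylinderPairsWithUnion S m where
  toFun AB := ⟨AB.1.1 ∪ AB.1.2, AB.1, AB.2.1, rfl, AB.2.2⟩
  invFun S := ⟨S.2.1, S.2.2.1, S.2.2.2.2⟩
  left_inv _ := rfl
  right_inv := by
    rintro ⟨S, AB, hcyl, rfl, hcard⟩
    rfl

theorem card_cylinderPairs_eq_sum_choose [Fintype α] (m : ℕ) :
    Nat.card {AB : Finset α × Finset α // IsCylinderPair AB.1 AB.2 ∧ #AB.1 + #AB.2 = m + 1} =
      ∑ k ∈ range (Fintype.card α + 1), (Fintype.card α).choose k *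
        Nat.card (cylinderPairsWithUnion (univ : Finset (Fin k)) m) := by
  rw [Nat.card_congr (cylinderPairsEquivSigmaUnion m), Nat.card_sigma, ← powerset_univ,
    sum_congr rfl fun S _ => card_cylinderPairsWithUnion_eq_univ S m,
    sum_powerset_apply_card (fun k => Nat.card (cylinderPairsWithUnion (univ : Finset (Fin k)) m)),
    card_univ]
  simp only [smul_eq_mul]

theorem cyl_decomposition (n m : ℕ) :
    Nat.card {AB : Finset (Fin (n + 1)) × Finset (Fin (n + 1)) //
        ((AB.1 ∩ AB.2).card ≤ 1 ∧ ∀ a ∈ AB.1, ∀ b ∈ AB.2, a ≤ b) ∧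
          AB.1.card + AB.2.card = m + 1} =
      ∑ j ∈ Finset.range (n + 1), Nat.choose (n + 1) (j + 1) * breveCil j m := by
  simp_rw [breveCil_eq_card_cylinderPairsWithUnion]
  have h := card_cylinderPairs_eq_sum_choose (α := Fin (n + 1)) m
  rw [Fintype.card_fin, sum_range_succ', univ_eq_empty,
    card_cylinderPairsWithUnion_empty, mul_zero, add_zero] at h
  exact h
end

section
/- For all natural numbers n and m, the number of pairs (A,B) of Finsets of Fin(n+1) satisfying A ≺ B and A.card + B.card = m+1 equals (m+2)·C(n+1, m+1), where C denotes the binomial coefficient. (This computes the number of m-simplices of the 0-cylinder Cil₀ Γ₊[n].) -/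
lemma card_filter_fin_lt (N k : ℕ) (hk : k ≤ N) :
    (Finset.univ.filter (fun i : Fin N => (i : ℕ) < k)).card = k := by
  rcases eq_or_lt_of_le hk with rfl | h
  · simp only [Finset.filter_true_of_mem (fun i _ => Fin.is_lt i), Finset.card_univ, Fintype.card_fin]
  · have : (Finset.univ.filter (fun i : Fin N => (i : ℕ) < k))
        = Finset.Iio ⟨k, h⟩ := by
      ext i; simp [Fin.lt_def]
    rw [this, Fin.card_Iio]

lemma split_unique {N : ℕ} {A₁ B₁ A₂ B₂ : Finset (Fin N)}
    (h1 : ∀ a ∈ A₁, ∀ b ∈ B₁, a < b) (h2 : ∀ a ∈ A₂, ∀ b ∈ B₂, a < b)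
    (hu : A₁ ∪ B₁ = A₂ ∪ B₂) (hc : A₁.card = A₂.card) : A₁ = A₂ := by
  by_contra hne
  have hd1 : (A₁ \ A₂).Nonempty := by
    rw [Finset.sdiff_nonempty]
    intro hsub
    exact hne (Finset.eq_of_subset_of_card_le hsub hc.ge)
  have hd2 : (A₂ \ A₁).Nonempty := by
    rw [Finset.sdiff_nonempty]
    intro hsub
    exact hne (Finset.eq_of_subset_of_card_le hsub hc.le).symm
  obtain ⟨a, ha⟩ := hd1
  obtain ⟨a', ha'⟩ := hd2
  rw [Finset.mem_sdiff] at ha ha'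
  have haB2 : a ∈ B₂ := by
    have : a ∈ A₂ ∪ B₂ := hu ▸ Finset.mem_union_left _ ha.1
    rcases Finset.mem_union.1 this with h | h
    · exact absurd h ha.2
    · exact h
  have haB1 : a' ∈ B₁ := by
    have : a' ∈ A₁ ∪ B₁ := hu ▸ Finset.mem_union_left _ ha'.1
    rcases Finset.mem_union.1 this with h | h
    · exact absurd h ha'.2
    · exact h
  exact absurd (h1 a ha.1 a' haB1) (not_lt.2 (h2 a' ha'.1 a haB2).le)

lemma image_univ_orderEmbOfFin {N k : ℕ} (S : Finset (Fin N)) (h : S.card = k) :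
    Finset.univ.image (S.orderEmbOfFin h) = S := by
  apply Finset.coe_injective
  rw [Finset.coe_image, Finset.coe_univ, Set.image_univ, Finset.range_orderEmbOfFin]

def splitAt {n m : ℕ} (p : Fin (m + 2) × {S : Finset (Fin (n + 1)) // S.card = m + 1}) :
    {AB : Finset (Fin (n + 1)) × Finset (Fin (n + 1)) //
        (AB.1 ∩ AB.2 = ∅ ∧ ∀ a ∈ AB.1, ∀ b ∈ AB.2, a < b) ∧
          AB.1.card + AB.2.card = m + 1} :=
  ⟨(((Finset.univ.filter fun i : Fin (m+1) => (i:ℕ) < (p.1:ℕ)).image (p.2.1.orderEmbOfFin p.2.2)),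
    ((Finset.univ.filter fun i : Fin (m+1) => ¬ (i:ℕ) < (p.1:ℕ)).image (p.2.1.orderEmbOfFin p.2.2))), by
    have hinj : Function.Injective (p.2.1.orderEmbOfFin p.2.2) :=
      (p.2.1.orderEmbOfFin p.2.2).injective
    refine ⟨⟨?_, ?_⟩, ?_⟩
    · rw [← Finset.image_inter _ _ hinj]
      have : (Finset.univ.filter fun i : Fin (m+1) => (i:ℕ) < (p.1:ℕ)) ∩
          (Finset.univ.filter fun i : Fin (m+1) => ¬ (i:ℕ) < (p.1:ℕ)) = ∅ := by
        ext i; simp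
      rw [this, Finset.image_empty]
    · intro a ha b hb
      simp only [Finset.mem_image, Finset.mem_filter, Finset.mem_univ, true_and] at ha hb
      obtain ⟨i, hi, rfl⟩ := ha
      obtain ⟨j, hj, rfl⟩ := hb
      exact (p.2.1.orderEmbOfFin p.2.2).strictMono (by rw [Fin.lt_def]; omega)
    · rw [Finset.card_image_of_injective _ hinj, Finset.card_image_of_injective _ hinj,
        Finset.card_filter_add_card_filter_not, Finset.card_univ, Fintype.card_fin]⟩

def cylEquiv (n m : ℕ) :
    {AB : Finset (Fin (n + 1)) × Finset (Fin (n + 1)) //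
        (AB.1 ∩ AB.2 = ∅ ∧ ∀ a ∈ AB.1, ∀ b ∈ AB.2, a < b) ∧
          AB.1.card + AB.2.card = m + 1} ≃
      Fin (m + 2) × {S : Finset (Fin (n + 1)) // S.card = m + 1} where
  toFun x := (⟨x.1.1.card, by have := x.2.2; omega⟩, ⟨x.1.1 ∪ x.1.2, by
      rw [Finset.card_union_of_disjoint (Finset.disjoint_iff_inter_eq_empty.2 x.2.1.1)]
      exact x.2.2⟩)
  invFun := splitAt
  left_inv x := by
    obtain ⟨⟨A, B⟩, ⟨⟨hdisj, hord⟩, hcard⟩⟩ := x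
    change A ∩ B = ∅ at hdisj
    change A.card + B.card = m + 1 at hcard
    apply Subtype.ext
    set p := splitAt (n := n) (m := m)
      (⟨A.card, by omega⟩, ⟨A ∪ B, by
        rw [Finset.card_union_of_disjoint (Finset.disjoint_iff_inter_eq_empty.2 hdisj)]
        exact hcard⟩) with hp
    obtain ⟨⟨hdisj', hord'⟩, hcard'⟩ := p.2
    have hAle : A.card ≤ m + 1 := by omega
    have hcA : p.1.1.card = A.card := by
      show ((Finset.univ.filter fun i : Fin (m+1) => (i:ℕ) < A.card).image _).card = A.card
      rw [Finset.card_image_of_injective _ (RelEmbedding.injective _),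
        card_filter_fin_lt _ _ hAle]
    have hU : p.1.1 ∪ p.1.2 = A ∪ B := by
      show (Finset.filter _ _).image _ ∪ (Finset.filter _ _).image _ = A ∪ B
      rw [← Finset.image_union, Finset.filter_union_filter_not_eq,
        image_univ_orderEmbOfFin]
    have hA : p.1.1 = A := split_unique hord' hord hU hcA
    have hB : p.1.2 = B := by
      have h1 : p.1.2 = (p.1.1 ∪ p.1.2) \ p.1.1 :=
        (Finset.union_sdiff_cancel_left (Finset.disjoint_iff_inter_eq_empty.2 hdisj')).symm
      have h2 : B = (A ∪ B) \ A :=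
        (Finset.union_sdiff_cancel_left (Finset.disjoint_iff_inter_eq_empty.2 hdisj)).symm
      rw [h1, h2, hU, hA]
    exact Prod.ext hA hB
  right_inv p := by
    obtain ⟨k, S, hS⟩ := p
    have hinj : Function.Injective (S.orderEmbOfFin hS) := (S.orderEmbOfFin hS).injective
    refine Prod.ext (Fin.ext ?_) (Subtype.ext ?_)
    · show ((Finset.univ.filter fun i : Fin (m+1) => (i:ℕ) < (k:ℕ)).image _).card = (k:ℕ)
      rw [Finset.card_image_of_injective _ hinj, card_filter_fin_lt _ _ (by omega)]
    · show (Finset.filter _ _).image _ ∪ (Finset.filter _ _).image _ = S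
      rw [← Finset.image_union, Finset.filter_union_filter_not_eq,
        image_univ_orderEmbOfFin]

theorem cyl0_simplices_count (n m : ℕ) :
    Nat.card {AB : Finset (Fin (n + 1)) × Finset (Fin (n + 1)) //
        (AB.1 ∩ AB.2 = ∅ ∧ ∀ a ∈ AB.1, ∀ b ∈ AB.2, a < b) ∧
          AB.1.card + AB.2.card = m + 1} =
      (m + 2) * Nat.choose (n + 1) (m + 1) := by
  rw [Nat.card_congr (cylEquiv n m), Nat.card_eq_fintype_card, Fintype.card_prod,
    Fintype.card_fin, Fintype.card_finset_len, Fintype.card_fin]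
end

section
/- For all natural numbers n and t (writing m = n + t), the number of pairs (A,B) of Finsets of Fin(n+1) with A ∪ B = Finset.univ and A.card + B.card = n + t + 1 equals ∑_{i=0}^{n+1} C(n+1, i) · C(i, t), where C denotes the binomial coefficient. (This is the formula |breve Cil₂ Γ₊[n]|_m = ∑_{i=−1}^{n} C(n+1,i+1)·C(i+1, m−n).) -/
theorem breve_cyl2_simplices_count (n t : ℕ) :
    Nat.card {AB : Finset (Fin (n + 1)) × Finset (Fin (n + 1)) //
        AB.1 ∪ AB.2 = Finset.univ ∧ AB.1.card + AB.2.card = n + t + 1} =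
      ∑ i ∈ Finset.range (n + 2), Nat.choose (n + 1) i * Nat.choose i t := by
  have e : {AB : Finset (Fin (n + 1)) × Finset (Fin (n + 1)) //
        AB.1 ∪ AB.2 = Finset.univ ∧ AB.1.card + AB.2.card = n + t + 1} ≃
      (Σ A : Finset (Fin (n + 1)), {S : Finset (Fin (n + 1)) // S ∈ A.powersetCard t}) :=
  { toFun := fun ⟨⟨A, B⟩, h⟩ => ⟨A, ⟨A ∩ B, by
      obtain ⟨hu, hc⟩ := h
      rw [Finset.mem_powersetCard]
      refine ⟨Finset.inter_subset_left, ?_⟩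
      have h1 := Finset.card_union_add_card_inter A B
      rw [hu, Finset.card_univ, Fintype.card_fin] at h1
      simp only at hc
      omega⟩⟩
    invFun := fun ⟨A, ⟨S, hS⟩⟩ => ⟨(A, Aᶜ ∪ S), by
      rw [Finset.mem_powersetCard] at hS
      constructor
      · simp only
        rw [← Finset.union_assoc, Finset.union_compl]
        exact Finset.union_eq_left.2 (Finset.subset_univ S)
      · simp only
        have hd : Disjoint Aᶜ S := disjoint_compl_left.mono_right hS.1
        rw [Finset.card_union_of_disjoint hd, Finset.card_compl, Fintype.card_fin, hS.2]
        have hA : A.card ≤ n + 1 := by simpa using Finset.card_le_univ A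
        omega⟩
    left_inv := fun ⟨⟨A, B⟩, h⟩ => by
      obtain ⟨hu, hc⟩ := h
      have hB : Aᶜ ⊆ B := by
        intro x hx
        have hx' : x ∈ A ∪ B := hu ▸ Finset.mem_univ x
        simp only [Finset.mem_compl] at hx
        rcases Finset.mem_union.1 hx' with h' | h'
        · exact absurd h' hx
        · exact h'
      have key : Aᶜ ∪ A ∩ B = B := by
        ext x
        simp only [Finset.mem_union, Finset.mem_compl, Finset.mem_inter]
        constructor
        · rintro (hx | ⟨_, hx⟩)
          · exact hB (Finset.mem_compl.2 hx)
          · exact hx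
        · intro hx
          by_cases hxA : x ∈ A
          · exact Or.inr ⟨hxA, hx⟩
          · exact Or.inl hxA
      exact Subtype.ext (Prod.ext rfl key)
    right_inv := fun ⟨A, ⟨S, hS⟩⟩ => by
      have hS' := Finset.mem_powersetCard.1 hS
      have key : A ∩ (Aᶜ ∪ S) = S := by
        rw [Finset.inter_union_distrib_left, Finset.inter_compl, Finset.empty_union,
          Finset.inter_eq_right.2 hS'.1]
      exact Sigma.ext rfl (heq_of_eq (Subtype.ext key)) }
  rw [Nat.card_congr e, Nat.card_eq_fintype_card, Fintype.card_sigma]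
  have h1 : ∀ A : Finset (Fin (n + 1)),
      Fintype.card {S : Finset (Fin (n + 1)) // S ∈ A.powersetCard t} =
        Nat.choose A.card t := by
    intro A
    rw [Fintype.card_coe, Finset.card_powersetCard]
  simp only [h1]
  rw [← Finset.sum_fiberwise_of_maps_to (g := Finset.card)
    (t := Finset.range (n + 2)) (fun A _ => by
      have hA : A.card ≤ n + 1 := by simpa using Finset.card_le_univ A
      simp only [Finset.mem_range]
      omega)]
  refine Finset.sum_congr rfl fun i hi => ?_
  have hfilter : Finset.filter (fun A : Finset (Fin (n + 1)) => A.card = i) Finset.univ =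
      Finset.powersetCard i Finset.univ := by
    ext A
    simp [Finset.mem_powersetCard, Finset.subset_univ]
  calc ∑ A ∈ Finset.filter (fun A : Finset (Fin (n + 1)) => A.card = i) Finset.univ,
        Nat.choose A.card t
      = ∑ _A ∈ Finset.filter (fun A : Finset (Fin (n + 1)) => A.card = i) Finset.univ,
        Nat.choose i t :=
        Finset.sum_congr rfl fun A hA => by rw [(Finset.mem_filter.1 hA).2]
    _ = (Finset.filter (fun A : Finset (Fin (n + 1)) => A.card = i) Finset.univ).card *
        Nat.choose i t := by rw [Finset.sum_const, smul_eq_mul]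
    _ = Nat.choose (n + 1) i * Nat.choose i t := by
        rw [hfilter, Finset.card_powersetCard, Finset.card_univ, Fintype.card_fin]
end

section
/- For all natural numbers n and m, the number of m-simplices of the barycentric subdivision Sd Γ₊[n] equals cad⁺(n,m). Precisely: the number of tuples consisting of a strictly monotone map k : Fin(m+1) → Fin(n+1) together with, for each i : Fin m, a strictly monotone map φ_i : Fin((k i : ℕ) + 1) → Fin((k i.succ : ℕ) + 1), and a strictly monotone map ψ : Fin((k (Fin.last m) : ℕ) + 1) → Fin(n+1), equals the number of strictly monotone maps c : Fin(m+1) → Finset (Fin (n+1)) with c 0 ≠ ∅. -/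
/-!
The composites `[k_j] → [n]` of an `m`-simplex of `Sd Γ₊[n]` are strictly monotone, so their
images form a strictly increasing chain of subsets of `[n]` of sizes `k_j + 1`, whose first member
is nonempty. A strictly monotone map out of a finite linear order is determined by its image, so
the simplex is recovered from this chain. Conversely, the increasing enumerations of the members
of an anchored chain factor through one another, because the chain is increasing, and these
factors form a simplex whose chain is the given one.
-/

open Finset

theorem StrictMono.eq_of_image_univ_eq {ι α : Type*} [Fintype ι] [LinearOrder ι] [Preorder α]
    [DecidableEq α] {f g : ι → α} (hf : StrictMono f) (hg : StrictMono g)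
    (h : univ.image f = univ.image g) : f = g := by
  rw [← hf.range_inj hg, ← Set.image_univ, ← Set.image_univ, ← coe_univ, ← coe_image,
    ← coe_image, h]

abbrev SdSimplex (n m : ℕ) :=
  {x : (k : Fin (m + 1) → Fin (n + 1)) ×
      ((i : Fin m) → (Fin ((k i.castSucc : ℕ) + 1) → Fin ((k i.succ : ℕ) + 1))) ×
      (Fin ((k (Fin.last m) : ℕ) + 1) → Fin (n + 1)) //
    StrictMono x.1 ∧ (∀ i : Fin m, StrictMono (x.2.1 i)) ∧ StrictMono x.2.2}

abbrev AnchoredChain (n m : ℕ) :=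
  {c : Fin (m + 1) → Finset (Fin (n + 1)) // StrictMono c ∧ c 0 ≠ ∅}

namespace SdSimplex

variable {n m : ℕ} (x : SdSimplex n m)

def comp : (j : Fin (m + 1)) → Fin ((x.1.1 j : ℕ) + 1) → Fin (n + 1) :=
  Fin.reverseInduction x.1.2.2 fun i g => g ∘ x.1.2.1 i

theorem comp_last : x.comp (Fin.last m) = x.1.2.2 :=
  Fin.reverseInduction_last

theorem comp_castSucc (i : Fin m) : x.comp i.castSucc = x.comp i.succ ∘ x.1.2.1 i :=
  Fin.reverseInduction_castSucc i

theorem strictMono_comp (j : Fin (m + 1)) : StrictMono (x.comp j) := by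
  induction j using Fin.reverseInduction with
  | last => rw [comp_last]; exact x.2.2.2
  | cast i ih => rw [comp_castSucc]; exact ih.comp (x.2.2.1 i)

def chain (j : Fin (m + 1)) : Finset (Fin (n + 1)) :=
  univ.image (x.comp j)

theorem card_chain (j : Fin (m + 1)) : #(x.chain j) = x.1.1 j + 1 := by
  rw [chain, card_image_of_injective _ (x.strictMono_comp j).injective, card_univ,
    Fintype.card_fin]

theorem chain_castSucc_subset (i : Fin m) : x.chain i.castSucc ⊆ x.chain i.succ := by
  rw [chain, chain, comp_castSucc, ← image_image]
  exact image_subset_image (subset_univ _)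

theorem strictMono_chain : StrictMono x.chain := by
  refine Fin.strictMono_iff_lt_succ.2 fun i => ?_
  refine (x.chain_castSucc_subset i).lt_of_ne fun h => ?_
  have hcard := congrArg card h
  have hk := x.2.1 (Fin.castSucc_lt_succ (i := i))
  rw [card_chain, card_chain] at hcard
  omega

theorem chain_nonempty (j : Fin (m + 1)) : (x.chain j).Nonempty :=
  card_pos.1 (by rw [card_chain]; omega)

def toAnchoredChain : AnchoredChain n m :=
  ⟨x.chain, x.strictMono_chain, (x.chain_nonempty 0).ne_empty⟩

theorem toAnchoredChain_injective :
    Function.Injective (toAnchoredChain : SdSimplex n m → AnchoredChain n m) := by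
  rintro ⟨⟨k, φ, ψ⟩, hx⟩ y h
  have hchain : chain ⟨⟨k, φ, ψ⟩, hx⟩ = y.chain := congrArg Subtype.val h
  obtain ⟨⟨k', φ', ψ'⟩, hy⟩ := y
  obtain rfl : k = k' := funext fun j => Fin.ext <| Nat.succ_injective <| by
    simpa only [card_chain] using congrArg card (congrFun hchain j)
  have hcomp : ∀ j, comp ⟨⟨k, φ, ψ⟩, hx⟩ j = comp ⟨⟨k, φ', ψ'⟩, hy⟩ j := fun j =>
    (strictMono_comp _ j).eq_of_image_univ_eq (strictMono_comp _ j) (congrFun hchain j)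
  obtain rfl : ψ = ψ' := by simpa only [comp_last] using hcomp (Fin.last m)
  obtain rfl : φ = φ' := funext fun i => funext fun a =>
    (strictMono_comp ⟨⟨k, φ', ψ⟩, hy⟩ i.succ).injective <| by
      simpa only [comp_castSucc, Function.comp_apply, hcomp i.succ] using
        congrFun (hcomp i.castSucc) a
  rfl

end SdSimplex

namespace AnchoredChain

variable {n m : ℕ} (c : AnchoredChain n m)

-- The truncated subtraction is harmless: anchoring makes every `c j` nonempty.
def rank (j : Fin (m + 1)) : Fin (n + 1) :=
  ⟨#(c.1 j) - 1, by have := card_le_univ (c.1 j); simp only [Fintype.card_fin] at this; omega⟩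

theorem nonempty (j : Fin (m + 1)) : (c.1 j).Nonempty :=
  (nonempty_iff_ne_empty.2 c.2.2).mono (c.2.1.monotone (Fin.zero_le j))

theorem card_eq_rank_succ (j : Fin (m + 1)) : #(c.1 j) = c.rank j + 1 := by
  have := (c.nonempty j).card_pos
  simp only [rank]
  omega

theorem strictMono_rank : StrictMono c.rank := fun i j hij => by
  have hcard := card_lt_card (c.2.1 hij)
  rw [card_eq_rank_succ, card_eq_rank_succ] at hcard
  exact Fin.lt_def.2 (by omega)

def enum (j : Fin (m + 1)) : Fin (c.rank j + 1) ↪o Fin (n + 1) :=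
  (c.1 j).orderEmbOfFin (c.card_eq_rank_succ j)

def step (i : Fin m) (a : Fin (c.rank i.castSucc + 1)) : Fin (c.rank i.succ + 1) :=
  ((c.1 i.succ).orderIsoOfFin (c.card_eq_rank_succ _)).symm
    ⟨c.enum i.castSucc a, c.2.1.monotone (Fin.castSucc_le_succ i) (orderEmbOfFin_mem _ _ a)⟩

theorem enum_step (i : Fin m) (a : Fin (c.rank i.castSucc + 1)) :
    c.enum i.succ (c.step i a) = c.enum i.castSucc a :=
  congrArg Subtype.val
    (OrderIso.apply_symm_apply ((c.1 i.succ).orderIsoOfFin (c.card_eq_rank_succ _)) _)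

theorem strictMono_step (i : Fin m) : StrictMono (c.step i) := fun a b hab =>
  (c.enum i.succ).lt_iff_lt.1 (by simpa only [enum_step] using (c.enum _).strictMono hab)

def toSdSimplex : SdSimplex n m :=
  ⟨⟨c.rank, c.step, c.enum (Fin.last m)⟩, c.strictMono_rank, c.strictMono_step,
    (c.enum _).strictMono⟩

theorem comp_toSdSimplex (j : Fin (m + 1)) : c.toSdSimplex.comp j = c.enum j := by
  induction j using Fin.reverseInduction with
  | last => exact SdSimplex.comp_last _
  | cast i ih =>
    funext a
    rw [SdSimplex.comp_castSucc, Function.comp_apply, ih]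
    exact c.enum_step i a

theorem toAnchoredChain_toSdSimplex : c.toSdSimplex.toAnchoredChain = c :=
  Subtype.ext <| funext fun j => by
    change univ.image (c.toSdSimplex.comp j) = c.1 j
    rw [comp_toSdSimplex]
    exact image_orderEmbOfFin_univ _ _

end AnchoredChain

theorem sd_simplices_eq_anchored_chains (n m : ℕ) :
    Nat.card {x : (k : Fin (m + 1) → Fin (n + 1)) ×
        ((i : Fin m) → (Fin ((k i.castSucc : ℕ) + 1) → Fin ((k i.succ : ℕ) + 1))) ×
        (Fin ((k (Fin.last m) : ℕ) + 1) → Fin (n + 1)) //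
          StrictMono x.1 ∧ (∀ i : Fin m, StrictMono (x.2.1 i)) ∧ StrictMono x.2.2} =
      Nat.card {c : Fin (m + 1) → Finset (Fin (n + 1)) // StrictMono c ∧ c 0 ≠ ∅} :=
  Nat.card_eq_of_bijective SdSimplex.toAnchoredChain
    ⟨SdSimplex.toAnchoredChain_injective,
      Function.LeftInverse.surjective AnchoredChain.toAnchoredChain_toSdSimplex⟩
end

section
/- For all natural numbers n and m, the number of strictly monotone maps c : Fin(m+1) → Finset (Fin (n+1)) with c 0 ≠ ∅ equals the number of strictly monotone maps c : Fin(m+1) → Finset (Fin (n+1)) with c 0 ≠ ∅ and c (Fin.last m) ≠ Finset.univ, plus the number of strictly monotone maps c : Fin m → Finset (Fin (n+1)) all of whose values are nonempty and proper (≠ Finset.univ). (This is the cardinal-sequence form of the isomorphism Con(Sd S₊[n−1]) ≅ Sd Γ₊[n]: the subdivision of Γ₊[n] is a cone on the subdivision of its boundary.) -/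
/-!
An anchored chain either has a proper top member, or it ends at the full set. Deleting that last
member maps the chains of the second kind bijectively onto the chains one step shorter made of
nonempty proper subsets; the inverse appends the full set, the cone point. This works in any
finite nontrivial bounded partial order, with `⊥` and `⊤` in place of `∅` and the full set.
-/

theorem Nat.card_subtype_eq_card_and_add_card_and_not {β : Type*} [Finite β] (p q : β → Prop) :
    Nat.card {x // p x} = Nat.card {x // p x ∧ q x} + Nat.card {x // p x ∧ ¬q x} := by
  classical
  rw [← Nat.card_congr (Equiv.subtypeSubtypeEquivSubtypeInter p q),
    ← Nat.card_congr (Equiv.subtypeSubtypeEquivSubtypeInter p (¬q ·)),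
    ← Nat.card_sum, Nat.card_congr (Equiv.sumCompl _)]

section Chains

variable {α : Type*} [PartialOrder α] {m : ℕ}

theorem Fin.strictMono_snoc_iff {f : Fin m → α} {x : α} :
    StrictMono (Fin.snoc f x : Fin (m + 1) → α) ↔ StrictMono f ∧ ∀ i, f i < x := by
  rw [← Fin.insertNth_last', Fin.strictMono_insertNth_iff]
  simp [Fin.castSucc_lt_last, (Fin.castSucc_lt_last _).not_ge]

variable [BoundedOrder α] [Nontrivial α]

def chainsEndingAtTopEquiv :
    {c : Fin (m + 1) → α // StrictMono c ∧ c 0 ≠ ⊥ ∧ c (Fin.last m) = ⊤} ≃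
      {d : Fin m → α // StrictMono d ∧ ∀ i, d i ≠ ⊥ ∧ d i ≠ ⊤} where
  toFun c := ⟨Fin.init c.1, fun _ _ hij => c.2.1 (Fin.castSucc_lt_castSucc_iff.mpr hij), fun i =>
    ⟨ne_bot_of_le_ne_bot c.2.2.1 (c.2.1.monotone (Fin.zero_le _)),
      fun h => (c.2.1 (Fin.castSucc_lt_last i)).ne (h.trans c.2.2.2.symm)⟩⟩
  invFun d := ⟨Fin.snoc d.1 ⊤,
    Fin.strictMono_snoc_iff.mpr ⟨d.2.1, fun i => lt_top_iff_ne_top.mpr (d.2.2 i).2⟩,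
    Fin.lastCases (motive := fun i => (Fin.snoc d.1 ⊤ : Fin (m + 1) → α) i ≠ ⊥)
      (by simp) (fun i => by simpa using (d.2.2 i).1) 0,
    Fin.snoc_last _ _⟩
  left_inv c := Subtype.ext <| by
    simpa only [c.2.2.2] using Fin.snoc_init_self (α := fun _ => α) c.1
  right_inv d := Subtype.ext <| Fin.init_snoc (α := fun _ => α) _ _

theorem card_anchored_chains_eq_add [Finite α] :
    Nat.card {c : Fin (m + 1) → α // StrictMono c ∧ c 0 ≠ ⊥} =
      Nat.card {c : Fin (m + 1) → α // StrictMono c ∧ c 0 ≠ ⊥ ∧ c (Fin.last m) ≠ ⊤} +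
      Nat.card {d : Fin m → α // StrictMono d ∧ ∀ i, d i ≠ ⊥ ∧ d i ≠ ⊤} := by
  rw [Nat.card_subtype_eq_card_and_add_card_and_not _ (fun c => c (Fin.last m) ≠ ⊤),
    ← Nat.card_congr chainsEndingAtTopEquiv]
  simp only [and_assoc, not_not]

end Chains

theorem sd_cone_decomposition (n m : ℕ) :
    Nat.card {c : Fin (m + 1) → Finset (Fin (n + 1)) // StrictMono c ∧ c 0 ≠ ∅} =
      Nat.card {c : Fin (m + 1) → Finset (Fin (n + 1)) //
          StrictMono c ∧ c 0 ≠ ∅ ∧ c (Fin.last m) ≠ Finset.univ} +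
      Nat.card {c : Fin m → Finset (Fin (n + 1)) //
          StrictMono c ∧ ∀ i, c i ≠ ∅ ∧ c i ≠ Finset.univ} :=
  card_anchored_chains_eq_add
end

section
/- For every natural number n ≥ 1, twice the number of pairs (A,B) of Finsets of Fin n satisfying A ≼ B and A.card + B.card = 2 equals n·(3n−1); that is, the number of 1-simplices of the standard cylinder Cil Γ₊[n−1] is the n-th pentagonal number n(3n−1)/2. -/
open Finset

lemma two_mul_card_le_pairs (n : ℕ) :
    2 * ((univ ×ˢ univ : Finset (Fin n × Fin n)).filter fun p => p.1 ≤ p.2).card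
      = n * (n + 1) := by
  have hset : ((univ ×ˢ univ : Finset (Fin n × Fin n)).filter fun p => p.1 ≤ p.2)
      = univ.biUnion fun a => {a} ×ˢ Finset.Ici a := by
    ext ⟨a, b⟩
    simp [Finset.mem_biUnion, Finset.mem_product, Finset.mem_Ici]
  rw [hset, Finset.card_biUnion]
  · have hcard : ∀ a : Fin n, ({a} ×ˢ Finset.Ici a).card = n - a.val := by
      intro a
      simp [Finset.card_product, Fin.card_Ici]
    simp only [hcard]
    rw [Fin.sum_univ_eq_sum_range (fun i => n - i)]
    have h1 : ∑ i ∈ Finset.range n, (n - i) = ∑ i ∈ Finset.range n, (i + 1) := by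
      rw [← Finset.sum_range_reflect]
      apply Finset.sum_congr rfl
      intro i hi
      simp only [Finset.mem_range] at hi
      omega
    rw [h1, Finset.sum_add_distrib, Finset.sum_const, Finset.card_range]
    have hg := Finset.sum_range_id_mul_two n
    have h2 : n * (n + 1) = n * (n - 1) + 2 * n := by
      rcases n with _ | m
      · rfl
      · simp only [Nat.add_sub_cancel]
        ring
    simp only [smul_eq_mul, mul_one]
    omega
  · intro a _ b _ hab
    simp only [Finset.disjoint_left]
    rintro ⟨x, y⟩ hx hy
    simp only [Finset.mem_product, Finset.mem_singleton] at hx hy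
    exact hab (hx.1 ▸ hy.1 ▸ rfl)

theorem cyl_one_simplices_pentagonal (n : ℕ) (hn : 1 ≤ n) :
    2 * Nat.card {AB : Finset (Fin n) × Finset (Fin n) //
        ((AB.1 ∩ AB.2).card ≤ 1 ∧ ∀ a ∈ AB.1, ∀ b ∈ AB.2, a ≤ b) ∧
          AB.1.card + AB.2.card = 2} =
      n * (3 * n - 1) := by
  classical
  rw [Nat.card_eq_fintype_card, Fintype.card_subtype]
  set T1 : Finset (Finset (Fin n) × Finset (Fin n)) :=
    (Finset.univ.powersetCard 2) ×ˢ {∅} with hT1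
  set T2 : Finset (Finset (Fin n) × Finset (Fin n)) :=
    ({∅} : Finset (Finset (Fin n))) ×ˢ (Finset.univ.powersetCard 2) with hT2
  set T3 : Finset (Finset (Fin n) × Finset (Fin n)) :=
    ((univ ×ˢ univ : Finset (Fin n × Fin n)).filter fun p => p.1 ≤ p.2).image
      (fun p => ({p.1}, {p.2})) with hT3
  have hset : (univ.filter fun AB : Finset (Fin n) × Finset (Fin n) =>
      ((AB.1 ∩ AB.2).card ≤ 1 ∧ ∀ a ∈ AB.1, ∀ b ∈ AB.2, a ≤ b) ∧
        AB.1.card + AB.2.card = 2) = T1 ∪ T2 ∪ T3 := by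
    ext ⟨A, B⟩
    simp only [Finset.mem_filter, Finset.mem_univ, true_and, Finset.mem_union, hT1, hT2, hT3,
      Finset.mem_product, Finset.mem_singleton, Finset.mem_powersetCard, Finset.mem_image]
    constructor
    · rintro ⟨⟨-, hord⟩, hcard⟩
      rcases (by omega : A.card = 0 ∨ A.card = 1 ∨ A.card = 2) with h0 | h1 | h2
      · left; right
        exact ⟨Finset.card_eq_zero.mp h0, Finset.subset_univ _, by omega⟩
      · obtain ⟨a, ha⟩ := Finset.card_eq_one.mp h1
        obtain ⟨b, hb⟩ := Finset.card_eq_one.mp (by omega : B.card = 1)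
        right
        refine ⟨(a, b), ?_, ?_⟩
        · exact hord a (ha ▸ Finset.mem_singleton_self a) b (hb ▸ Finset.mem_singleton_self b)
        · simp [ha, hb]
      · left; left
        exact ⟨⟨Finset.subset_univ _, h2⟩, Finset.card_eq_zero.mp (by omega : B.card = 0)⟩
    · rintro ((⟨⟨-, hA⟩, hB⟩ | ⟨hA, -, hB⟩) | ⟨⟨a, b⟩, hab, heq⟩)
      · subst hB
        refine ⟨⟨by simp, fun a _ b hb => absurd hb (Finset.notMem_empty b)⟩, by simp [hA]⟩
      · subst hA
        refine ⟨⟨by simp, fun a ha => absurd ha (Finset.notMem_empty a)⟩, by simp [hB]⟩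
      · rw [Prod.ext_iff] at heq
        obtain ⟨h1, h2⟩ := heq
        dsimp only at h1 h2
        subst h1; subst h2
        refine ⟨⟨le_trans (Finset.card_le_card Finset.inter_subset_left) (by simp), ?_⟩, by simp⟩
        intro x hx y hy
        rw [Finset.mem_singleton] at hx hy
        subst hx; subst hy; exact hab
  rw [hset]
  have hd12 : Disjoint T1 T2 := by
    rw [Finset.disjoint_left]
    rintro ⟨A, B⟩ h1 h2
    simp only [hT1, hT2, Finset.mem_product, Finset.mem_singleton, Finset.mem_powersetCard] at h1 h2
    rw [h2.1] at h1
    simp at h1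
  have hd3 : Disjoint (T1 ∪ T2) T3 := by
    rw [Finset.disjoint_left]
    rintro ⟨A, B⟩ h1 h2
    simp only [hT1, hT2, hT3, Finset.mem_union, Finset.mem_product, Finset.mem_singleton,
      Finset.mem_powersetCard, Finset.mem_image, Finset.mem_filter, Finset.mem_univ,
      true_and] at h1 h2
    obtain ⟨⟨a, b⟩, -, heq⟩ := h2
    rw [Prod.ext_iff] at heq
    obtain ⟨hA', hB'⟩ := heq
    dsimp only at hA' hB'
    rcases h1 with ⟨⟨-, hA⟩, hB⟩ | ⟨hA, -, hB⟩
    · rw [← hB'] at hB; simp at hB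
    · rw [← hA'] at hA; simp at hA
  rw [Finset.card_union_of_disjoint hd3, Finset.card_union_of_disjoint hd12]
  have hc1 : T1.card = n.choose 2 := by
    simp [hT1, Finset.card_product, Finset.card_powersetCard]
  have hc2 : T2.card = n.choose 2 := by
    simp [hT2, Finset.card_product, Finset.card_powersetCard]
  have hc3 : T3.card
      = ((univ ×ˢ univ : Finset (Fin n × Fin n)).filter fun p => p.1 ≤ p.2).card := by
    rw [hT3]
    apply Finset.card_image_of_injective
    intro p q h
    rw [Prod.ext_iff] at h
    obtain ⟨h1, h2⟩ := h
    exact Prod.ext (Finset.singleton_injective h1) (Finset.singleton_injective h2)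
  rw [hc1, hc2, hc3]
  have hk := two_mul_card_le_pairs n
  have hch : 2 * n.choose 2 = n * (n - 1) := by
    rw [Nat.choose_two_right, Nat.mul_div_cancel']
    rcases n with _ | m
    · simp
    · simpa [Nat.add_sub_cancel, mul_comm] using (Nat.even_mul_succ_self m).two_dvd
  have hfin : n * (n - 1) + n * (n - 1) + n * (n + 1) = n * (3 * n - 1) := by
    rcases n with _ | m
    · rfl
    · simp only [Nat.add_sub_cancel, Nat.succ_sub_one]
      have h32 : 3 * (m + 1) - 1 = 3 * m + 2 := by omega
      rw [h32]; ring
  omega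
end

section
/- For every natural number n, three times the number of pairs (A,B) of Finsets of Fin(n+1) satisfying A ≼ B and A.card + B.card = 3 equals n·(n+1)·(2n+1); that is, the number of 2-simplices of the standard cylinder Cil Γ₊[n] equals n(n+1)(2n+1)/3 (sequence A006331). -/
/-!
Since every element of `A` lies below every element of `B`, the condition `#(A ∩ B) ≤ 1` is
automatic. Sorting the pairs by `#A ∈ {0, 1, 2, 3}`: when one side is empty the other is any
`3`-subset, giving `2 * C(n+1, 3)` pairs; when `A = {a}`, `B` is a `2`-subset of `Ici a`, and
when `B = {b}`, `A` is a `2`-subset of `Iic b`, each family contributing `C(n+2, 3)` by the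
hockey-stick identity. Finally `C(n+1, 3) + C(n+2, 3) = ∑ k ≤ n, k ^ 2`.
-/

open Finset

lemma Finset.card_inter_le_one_of_forall_le {α : Type*} [PartialOrder α] [DecidableEq α]
    {A B : Finset α} (h : ∀ a ∈ A, ∀ b ∈ B, a ≤ b) : #(A ∩ B) ≤ 1 :=
  card_le_one.2 fun x hx y hy ↦ le_antisymm (h x (mem_inter.1 hx).1 y (mem_inter.1 hy).2)
    (h y (mem_inter.1 hy).1 x (mem_inter.1 hx).2)

section CylinderPairs

variable (α : Type*) [Fintype α] [LinearOrder α]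

/-- The pairs `A ≼ B` encoding the `(m - 1)`-simplices of the standard cylinder on `α`, without
the automatic clause `#(A ∩ B) ≤ 1`. -/
def cylinderPairs (m : ℕ) : Finset (Finset α × Finset α) :=
  {AB | (∀ a ∈ AB.1, ∀ b ∈ AB.2, a ≤ b) ∧ #AB.1 + #AB.2 = m}

variable {α} in
lemma mem_cylinderPairs {m : ℕ} {AB : Finset α × Finset α} :
    AB ∈ cylinderPairs α m ↔ (∀ a ∈ AB.1, ∀ b ∈ AB.2, a ≤ b) ∧ #AB.1 + #AB.2 = m := by
  simp [cylinderPairs]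

lemma natCard_subtype_eq_card_cylinderPairs (m : ℕ) :
    Nat.card {AB : Finset α × Finset α //
        (#(AB.1 ∩ AB.2) ≤ 1 ∧ ∀ a ∈ AB.1, ∀ b ∈ AB.2, a ≤ b) ∧ #AB.1 + #AB.2 = m} =
      #(cylinderPairs α m) := by
  rw [Nat.card_eq_fintype_card, Fintype.card_subtype, cylinderPairs]
  congr 1
  exact filter_congr fun AB _ ↦
    ⟨fun ⟨⟨_, hle⟩, hm⟩ ↦ ⟨hle, hm⟩,
      fun ⟨hle, hm⟩ ↦ ⟨⟨card_inter_le_one_of_forall_le hle, hle⟩, hm⟩⟩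

lemma card_filter_card_fst_eq_zero (m : ℕ) :
    #{AB ∈ cylinderPairs α m | #AB.1 = 0} = (Fintype.card α).choose m := by
  have : {AB ∈ cylinderPairs α m | #AB.1 = 0} = {∅} ×ˢ powersetCard m univ := by
    ext ⟨A, B⟩
    simp only [mem_filter, mem_cylinderPairs, card_eq_zero, mem_product, mem_singleton,
      mem_powersetCard, subset_univ, true_and]
    aesop
  rw [this, card_product, card_powersetCard, card_singleton, one_mul, card_univ]

lemma card_filter_card_snd_eq_zero (m : ℕ) :
    #{AB ∈ cylinderPairs α m | #AB.2 = 0} = (Fintype.card α).choose m := by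
  have : {AB ∈ cylinderPairs α m | #AB.2 = 0} = powersetCard m univ ×ˢ {∅} := by
    ext ⟨A, B⟩
    simp only [mem_filter, mem_cylinderPairs, card_eq_zero, mem_product, mem_singleton,
      mem_powersetCard, subset_univ, true_and]
    aesop
  rw [this, card_product, card_powersetCard, card_singleton, mul_one, card_univ]

lemma card_filter_card_fst_eq_one [LocallyFiniteOrderTop α] (j : ℕ) :
    #{AB ∈ cylinderPairs α (j + 1) | #AB.1 = 1} = ∑ a : α, (#(Ici a)).choose j := by
  have : {AB ∈ cylinderPairs α (j + 1) | #AB.1 = 1} =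
      (univ : Finset α).biUnion fun a ↦ {{a}} ×ˢ powersetCard j (Ici a) := by
    ext ⟨A, B⟩
    simp only [mem_filter, mem_cylinderPairs, card_eq_one, mem_biUnion, mem_univ, true_and,
      mem_product, mem_singleton, mem_powersetCard, subset_iff, mem_Ici]
    constructor
    · rintro ⟨⟨hle, hcard⟩, a, rfl⟩
      exact ⟨a, rfl, fun b ↦ hle a (mem_singleton_self a) b, by simpa [add_comm] using hcard⟩
    · rintro ⟨a, rfl, hle, hcard⟩
      exact ⟨⟨by simpa using hle, by simp [hcard, add_comm]⟩, a, rfl⟩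
  rw [this, card_biUnion fun a _ a' _ h ↦ disjoint_product.2 (.inl (by simpa using h))]
  simp

lemma card_filter_card_snd_eq_one [LocallyFiniteOrderBot α] (j : ℕ) :
    #{AB ∈ cylinderPairs α (j + 1) | #AB.2 = 1} = ∑ b : α, (#(Iic b)).choose j := by
  have : {AB ∈ cylinderPairs α (j + 1) | #AB.2 = 1} =
      (univ : Finset α).biUnion fun b ↦ powersetCard j (Iic b) ×ˢ {{b}} := by
    ext ⟨A, B⟩
    simp only [mem_filter, mem_cylinderPairs, card_eq_one, mem_biUnion, mem_univ, true_and,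
      mem_product, mem_singleton, mem_powersetCard, subset_iff, mem_Iic]
    constructor
    · rintro ⟨⟨hle, hcard⟩, b, rfl⟩
      exact ⟨b, ⟨fun a ha ↦ hle a ha b (mem_singleton_self b), by simpa using hcard⟩, rfl⟩
    · rintro ⟨b, ⟨hle, hcard⟩, rfl⟩
      exact ⟨⟨by simpa using hle, by simp [hcard]⟩, b, rfl⟩
  rw [this, card_biUnion fun b _ b' _ h ↦ disjoint_product.2 (.inr (by simpa using h))]
  simp

lemma card_cylinderPairs_three [LocallyFiniteOrderTop α] [LocallyFiniteOrderBot α] :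
    #(cylinderPairs α 3) = 2 * (Fintype.card α).choose 3 + ∑ a : α, (#(Ici a)).choose 2 +
      ∑ b : α, (#(Iic b)).choose 2 := by
  have fiber_two : {AB ∈ cylinderPairs α 3 | #AB.1 = 2} = {AB ∈ cylinderPairs α 3 | #AB.2 = 1} :=
    filter_congr fun AB h ↦ by have := (mem_cylinderPairs.1 h).2; omega
  have fiber_three : {AB ∈ cylinderPairs α 3 | #AB.1 = 3} =
      {AB ∈ cylinderPairs α 3 | #AB.2 = 0} :=
    filter_congr fun AB h ↦ by have := (mem_cylinderPairs.1 h).2; omega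
  rw [card_eq_sum_card_fiberwise (f := fun AB ↦ #AB.1) (t := range 4)
    fun AB h ↦ by have := (mem_cylinderPairs.1 h).2; simp only [mem_coe, mem_range]; omega]
  simp only [sum_range_succ, sum_range_zero, zero_add]
  rw [fiber_two, fiber_three, card_filter_card_fst_eq_zero, card_filter_card_fst_eq_one,
    card_filter_card_snd_eq_one, card_filter_card_snd_eq_zero]
  ring

end CylinderPairs

lemma Fin.sum_choose_card_Iic (n k : ℕ) :
    ∑ b : Fin n, (#(Iic b)).choose (k + 1) = (n + 1).choose (k + 2) := by
  induction n with
  | zero => simp [Nat.choose_eq_zero_of_lt]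
  | succ n ih =>
    rw [Fin.sum_univ_castSucc]
    simp only [Fin.card_Iic, Fin.val_castSucc, Fin.val_last] at ih ⊢
    rw [ih, Nat.choose_succ_succ' (n + 1) (k + 1), add_comm]

lemma Fin.sum_comp_card_Ici_eq (n : ℕ) (f : ℕ → ℕ) :
    ∑ a : Fin n, f #(Ici a) = ∑ a : Fin n, f #(Iic a) :=
  (Fintype.sum_equiv Fin.revPerm _ _ fun a ↦ by
    rw [Fin.revPerm_apply, ← map_revPerm_Iic, card_map]).symm

lemma Nat.six_mul_choose_three_add_choose_three (n : ℕ) :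
    6 * ((n + 1).choose 3 + (n + 2).choose 3) = n * (n + 1) * (2 * n + 1) := by
  have pascal := Nat.choose_succ_succ' (n + 1) 2
  have h3 := Nat.add_one_mul_choose_eq (n + 1) 2
  have h2 := Nat.add_one_mul_choose_eq n 1
  rw [Nat.choose_one_right] at h2
  nlinarith

theorem cyl_two_simplices_A006331 (n : ℕ) :
    3 * Nat.card {AB : Finset (Fin (n + 1)) × Finset (Fin (n + 1)) //
        ((AB.1 ∩ AB.2).card ≤ 1 ∧ ∀ a ∈ AB.1, ∀ b ∈ AB.2, a ≤ b) ∧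
          AB.1.card + AB.2.card = 3} =
      n * (n + 1) * (2 * n + 1) := by
  rw [natCard_subtype_eq_card_cylinderPairs, card_cylinderPairs_three,
    Fin.sum_comp_card_Ici_eq (n + 1) (·.choose 2), Fin.sum_choose_card_Iic, Fintype.card_fin,
    ← Nat.six_mul_choose_three_add_choose_three]
  ring
end

section
/- For every natural number n ≥ 1, 24 times the number of pairs (A,B) of Finsets of Fin(n+1) satisfying A ≼ B and A.card + B.card = 4 equals (n−1)·n·(n+1)·(5n+2); that is, the number of 3-simplices of the standard cylinder Cil Γ₊[n] equals (n−1)n(n+1)(5n+2)/24 (sequence A212415). -/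
/-!
A cylinder pair `A ≼ B` with `A.card + B.card = m + 1` is determined by its union `U` and by
`A.card`: `A` is the initial segment of `U` of that size, and `B` is the rest of `U`, together
with the maximum of `A` when the two meet; conversely every initial segment arises. If `A` and
`B` are disjoint then `U.card = m + 1` and `A.card` is any of `0, …, m + 1`; otherwise
`U.card = m` and `A.card` is any of `1, …, m`. So an `N`-element chain carries
`(m + 2) * C(N, m + 1) + m * C(N, m)` such pairs, and `m = 3` gives the formula.
-/

namespace Finset

variable {α : Type*} [LinearOrder α]

/-- The standard cylinder condition `A ≼ B`. -/
def CylinderLE (A B : Finset α) : Prop :=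
  #(A ∩ B) ≤ 1 ∧ ∀ a ∈ A, ∀ b ∈ B, a ≤ b

theorem exists_subset_card_eq_forall_le_sdiff {U : Finset α} {k : ℕ} (hk : k ≤ #U) :
    ∃ A ⊆ U, #A = k ∧ ∀ a ∈ A, ∀ b ∈ U \ A, a ≤ b := by
  induction k with
  | zero => exact ⟨∅, empty_subset U, card_empty, by simp⟩
  | succ k ih =>
    obtain ⟨A, hAU, hAk, hA⟩ := ih (by omega)
    have hne : (U \ A).Nonempty := by
      rw [← card_pos, card_sdiff_of_subset hAU]; omega
    set p := (U \ A).min' hne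
    obtain ⟨hpU, hpA⟩ := mem_sdiff.mp ((U \ A).min'_mem hne)
    refine ⟨insert p A, insert_subset hpU hAU, by rw [card_insert_of_notMem hpA, hAk], ?_⟩
    intro a ha b hb
    have hb' : b ∈ U \ A := sdiff_subset_sdiff Subset.rfl (subset_insert p A) hb
    rcases mem_insert.mp ha with rfl | ha
    · exact (U \ A).min'_le b hb'
    · exact hA a ha b hb'

theorem subset_or_subset_of_forall_le_sdiff {U A₁ A₂ : Finset α}
    (hA₁ : ∀ a ∈ A₁, ∀ b ∈ U \ A₁, a ≤ b) (hA₂ : ∀ a ∈ A₂, ∀ b ∈ U \ A₂, a ≤ b)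
    (h₁ : A₁ ⊆ U) (h₂ : A₂ ⊆ U) : A₁ ⊆ A₂ ∨ A₂ ⊆ A₁ := by
  by_contra! h
  obtain ⟨x, hx₁, hx₂⟩ := not_subset.mp h.1
  obtain ⟨y, hy₂, hy₁⟩ := not_subset.mp h.2
  have hxy := hA₁ x hx₁ y (mem_sdiff.mpr ⟨h₂ hy₂, hy₁⟩)
  have hyx := hA₂ y hy₂ x (mem_sdiff.mpr ⟨h₁ hx₁, hx₂⟩)
  exact hx₂ (le_antisymm hxy hyx ▸ hy₂)

theorem eq_of_forall_le_sdiff_of_card_eq {U A₁ A₂ : Finset α}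
    (hA₁ : ∀ a ∈ A₁, ∀ b ∈ U \ A₁, a ≤ b) (hA₂ : ∀ a ∈ A₂, ∀ b ∈ U \ A₂, a ≤ b)
    (h₁ : A₁ ⊆ U) (h₂ : A₂ ⊆ U) (hcard : #A₁ = #A₂) : A₁ = A₂ := by
  rcases subset_or_subset_of_forall_le_sdiff hA₁ hA₂ h₁ h₂ with h | h
  · exact eq_of_subset_of_card_le h hcard.ge
  · exact (eq_of_subset_of_card_le h hcard.le).symm

/-- A common point of `A` and `B` is the maximum of `A`. -/
theorem eq_of_forall_le_of_union_eq {A B B' : Finset α} (hB : ∀ a ∈ A, ∀ b ∈ B, a ≤ b)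
    (hB' : ∀ a ∈ A, ∀ b ∈ B', a ≤ b) (hU : A ∪ B = A ∪ B')
    (hI : (A ∩ B).Nonempty ↔ (A ∩ B').Nonempty) : B = B' := by
  have key : ∀ {B B' : Finset α}, (∀ a ∈ A, ∀ b ∈ B, a ≤ b) → (∀ a ∈ A, ∀ b ∈ B', a ≤ b) →
      A ∪ B = A ∪ B' → ((A ∩ B).Nonempty → (A ∩ B').Nonempty) → B ⊆ B' := by
    intro B B' hB hB' hU hI x hxB
    by_cases hxA : x ∈ A
    · obtain ⟨q, hq⟩ := hI ⟨x, mem_inter.mpr ⟨hxA, hxB⟩⟩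
      obtain ⟨hqA, hqB'⟩ := mem_inter.mp hq
      rwa [le_antisymm (hB' x hxA q hqB') (hB q hqA x hxB)]
    · have hx : x ∈ A ∪ B' := hU ▸ mem_union_right A hxB
      exact (mem_union.mp hx).resolve_left hxA
  exact (key hB hB' hU hI.1).antisymm (key hB' hB hU.symm hI.2)

theorem forall_le_union_sdiff_of_forall_le {A B : Finset α} (h : ∀ a ∈ A, ∀ b ∈ B, a ≤ b) :
    ∀ a ∈ A, ∀ b ∈ (A ∪ B) \ A, a ≤ b := fun a ha b hb ↦
  h a ha b ((mem_union.mp (mem_sdiff.mp hb).1).resolve_left (mem_sdiff.mp hb).2)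

theorem CylinderLE.eq_of_union_eq {A B A' B' : Finset α} (h : CylinderLE A B)
    (h' : CylinderLE A' B') (hsum : #A + #B = #A' + #B') (hA : #A = #A')
    (hU : A ∪ B = A' ∪ B') : A = A' ∧ B = B' := by
  obtain rfl : A = A' :=
    eq_of_forall_le_sdiff_of_card_eq (forall_le_union_sdiff_of_forall_le h.2)
      (hU ▸ forall_le_union_sdiff_of_forall_le h'.2) subset_union_left
      (hU ▸ subset_union_left) hA
  refine ⟨rfl, eq_of_forall_le_of_union_eq h.2 h'.2 hU ?_⟩
  have h₁ := card_union_add_card_inter A B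
  have h₂ := card_union_add_card_inter A B'
  rw [hU] at h₁
  rw [← card_pos, ← card_pos]
  omega

theorem exists_cylinderLE_disjoint {U : Finset α} {k : ℕ} (hk : k ≤ #U) :
    ∃ A B, CylinderLE A B ∧ #A = k ∧ A ∪ B = U ∧ #A + #B = #U := by
  obtain ⟨A, hAU, hAk, hA⟩ := exists_subset_card_eq_forall_le_sdiff hk
  refine ⟨A, U \ A, ⟨?_, hA⟩, hAk, union_sdiff_of_subset hAU, ?_⟩
  · rw [inter_sdiff_self, card_empty]; omega
  · rw [card_sdiff_of_subset hAU, hAk]; omega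

theorem exists_cylinderLE_inter {U : Finset α} {k : ℕ} (hk₀ : 1 ≤ k) (hk : k ≤ #U) :
    ∃ A B, CylinderLE A B ∧ #A = k ∧ A ∪ B = U ∧ #A + #B = #U + 1 := by
  obtain ⟨A, hAU, hAk, hA⟩ := exists_subset_card_eq_forall_le_sdiff hk
  have hne : A.Nonempty := by rw [← card_pos]; omega
  set p := A.max' hne
  have hpA : p ∈ A := A.max'_mem hne
  have hp : p ∉ U \ A := fun h ↦ (mem_sdiff.mp h).2 hpA
  refine ⟨A, insert p (U \ A), ⟨?_, ?_⟩, hAk, ?_, ?_⟩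
  · calc #(A ∩ insert p (U \ A)) ≤ #{p} := card_le_card fun x hx ↦ by
          obtain ⟨hxA, hx⟩ := mem_inter.mp hx
          rcases mem_insert.mp hx with rfl | hx
          · exact mem_singleton_self _
          · exact absurd hxA (mem_sdiff.mp hx).2
      _ = 1 := card_singleton p
  · intro a ha b hb
    rcases mem_insert.mp hb with rfl | hb
    · exact A.le_max' a ha
    · exact hA a ha b hb
  · rw [union_insert, union_sdiff_of_subset hAU, insert_eq_of_mem (hAU hpA)]
  · rw [card_insert_of_notMem hp, card_sdiff_of_subset hAU, hAk]; omega

theorem card_cylinderLE (α : Type*) [Fintype α] [LinearOrder α] (m : ℕ) :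
    Nat.card {AB : Finset α × Finset α // CylinderLE AB.1 AB.2 ∧ #AB.1 + #AB.2 = m + 1} =
      (m + 2) * (Fintype.card α).choose (m + 1) + m * (Fintype.card α).choose m := by
  classical
  rw [Nat.card_eq_fintype_card, Fintype.card_subtype]
  set T : Finset (ℕ × Finset α) :=
    range (m + 2) ×ˢ powersetCard (m + 1) univ ∪ Icc 1 m ×ˢ powersetCard m univ
  have hT : #T = (m + 2) * (Fintype.card α).choose (m + 1) + m * (Fintype.card α).choose m := by
    rw [card_union_of_disjoint, card_product, card_product, card_range, Nat.card_Icc,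
      card_powersetCard, card_powersetCard, card_univ, Nat.add_sub_cancel]
    refine disjoint_left.mpr fun x hx hx' ↦ ?_
    simp only [mem_product, mem_powersetCard] at hx hx'
    omega
  rw [← hT]
  refine card_nbij (fun AB ↦ (#AB.1, AB.1 ∪ AB.2)) ?_ ?_ ?_
  · rintro ⟨A, B⟩ h
    simp only [mem_coe, mem_filter, mem_univ, true_and] at h
    obtain ⟨⟨hI, -⟩, hsum⟩ := h
    have := card_union_add_card_inter A B
    have := card_le_card (inter_subset_left (s₁ := A) (s₂ := B))
    have := card_le_card (inter_subset_right (s₁ := A) (s₂ := B))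
    simp only [T, mem_coe, mem_union, mem_product, mem_range, mem_Icc, mem_powersetCard,
      subset_univ, true_and]
    omega
  · rintro ⟨A, B⟩ h ⟨A', B'⟩ h' he
    simp only [mem_coe, mem_filter, mem_univ, true_and] at h h'
    simp only [Prod.mk.injEq] at he ⊢
    exact h.1.eq_of_union_eq h'.1 (by omega) he.1 he.2
  · rintro ⟨k, U⟩ hkU
    simp only [T, mem_coe, mem_union, mem_product, mem_range, mem_Icc, mem_powersetCard,
      subset_univ, true_and] at hkU
    obtain ⟨A, B, hAB, hA, hU, hsum⟩ : ∃ A B, CylinderLE A B ∧ #A = k ∧ A ∪ B = U ∧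
        #A + #B = m + 1 := by
      rcases hkU with ⟨hk, hU⟩ | ⟨⟨hk₀, hk⟩, hU⟩
      · exact hU ▸ exists_cylinderLE_disjoint (by omega)
      · exact hU ▸ exists_cylinderLE_inter hk₀ (by omega)
    exact ⟨(A, B), by simp [hAB, hsum], by simp [hA, hU]⟩

end Finset

theorem choose_formula_A212415 (n : ℕ) :
    24 * (5 * (n + 1).choose 4 + 3 * (n + 1).choose 3) =
      (n - 1) * n * (n + 1) * (5 * n + 2) := by
  obtain _ | _ | k := n
  · rfl
  · rfl
  · have h4 : Nat.factorial 4 * (k + 3).choose 4 = (k + 3) * (k + 2) * (k + 1) * k := by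
      rw [← Nat.descFactorial_eq_factorial_mul_choose]
      simp only [Nat.descFactorial_succ, add_tsub_cancel_right, Nat.reduceSubDiff,
        Nat.add_one_sub_one, tsub_zero, Nat.descFactorial_zero, mul_one]
      ring
    have h3 : Nat.factorial 3 * (k + 3).choose 3 = (k + 3) * (k + 2) * (k + 1) := by
      rw [← Nat.descFactorial_eq_factorial_mul_choose]
      simp only [Nat.descFactorial_succ, Nat.reduceSubDiff, Nat.add_one_sub_one, tsub_zero,
        Nat.descFactorial_zero, mul_one]
      ring
    simp only [Nat.factorial] at h4 h3
    simp only [Nat.add_sub_cancel]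
    linarith

theorem cyl_three_simplices_A212415_general (n : ℕ) :
    24 * Nat.card {AB : Finset (Fin (n + 1)) × Finset (Fin (n + 1)) //
        ((AB.1 ∩ AB.2).card ≤ 1 ∧ ∀ a ∈ AB.1, ∀ b ∈ AB.2, a ≤ b) ∧
          AB.1.card + AB.2.card = 4} =
      (n - 1) * n * (n + 1) * (5 * n + 2) := by
  have h := Finset.card_cylinderLE (Fin (n + 1)) 3
  rw [Fintype.card_fin] at h
  exact (congrArg (24 * ·) h).trans (choose_formula_A212415 n)

theorem cyl_three_simplices_A212415 (n : ℕ) (hn : 1 ≤ n) :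
    24 * Nat.card {AB : Finset (Fin (n + 1)) × Finset (Fin (n + 1)) //
        ((AB.1 ∩ AB.2).card ≤ 1 ∧ ∀ a ∈ AB.1, ∀ b ∈ AB.2, a ≤ b) ∧
          AB.1.card + AB.2.card = 4} =
      (n - 1) * n * (n + 1) * (5 * n + 2) :=
  cyl_three_simplices_A212415_general n
end
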